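/- arXiv:1908.03344 — 11 statements merged into one kernel-verified Lean document; each statement's English description precedes it below -/
import Mathlib

section
/- Let g > 0 and G > 0 be real constants. The function (u, w) ↦ g/u + G·w⁴/u² is strictly convex on the open convex set {(u, w) ∈ ℝ² : u > 0, w > 0}. (Equivalently, the hydrostatic and vertical-elastic part Ẽ₁ = g·H + G·H²·A_cc of the Saint-Venant–Maxwell energy is a strictly convex function of the variables (H⁻¹, A_cc^{1/4}) on H > 0, A_cc > 0.) -/
/-!
Write `g/u + G w⁴/u² = g u⁻¹ + G (w²/u)²`. The first term is convex. The perspective `w²/u` of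
`w ↦ w²` is jointly convex, and strictly convex along any segment not contained in a ray from the
origin; along such a ray it is linear and, since `w > 0`, takes different values at different
points, so its square is strictly convex there.
-/

theorem StrictConvexOn.const_mul {E : Type*} [AddCommMonoid E] [Module ℝ E] {s : Set E}
    {f : E → ℝ} {c : ℝ} (hc : 0 < c) (hf : StrictConvexOn ℝ s f) :
    StrictConvexOn ℝ s fun x => c * f x := by
  refine ⟨hf.1, fun x hx y hy hxy a b ha hb hab => ?_⟩
  simp only [smul_eq_mul] at hf ⊢
  calc c * f (a • x + b • y) < c * (a * f x + b * f y) :=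
        mul_lt_mul_of_pos_left (hf.2 hx hy hxy ha hb hab) hc
    _ = a * (c * f x) + b * (c * f y) := by ring

/-- Squaring is strictly convex and increasing on `[0, ∞)`, so strictness of `f` is only needed
between points where `f` takes the same value. -/
theorem ConvexOn.strictConvexOn_sq {E : Type*} [AddCommMonoid E] [Module ℝ E] {s : Set E}
    {f : E → ℝ} (hf : ConvexOn ℝ s f) (hf₀ : ∀ x ∈ s, 0 ≤ f x)
    (hlevel : ∀ x ∈ s, ∀ y ∈ s, x ≠ y → f x = f y → ∀ ⦃a b : ℝ⦄, 0 < a → 0 < b → a + b = 1 →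
      f (a • x + b • y) < a * f x + b * f y) :
    StrictConvexOn ℝ s fun x => f x ^ 2 := by
  refine ⟨hf.1, fun x hx y hy hxy a b ha hb hab => ?_⟩
  have hsq := Even.strictConvexOn_pow (n := 2) even_two two_ne_zero
  have hmid := hf₀ _ (hf.1 hx hy ha.le hb.le hab)
  have hcomb := hf.2 hx hy ha.le hb.le hab
  simp only [smul_eq_mul] at hcomb hsq ⊢
  by_cases heq : f x = f y
  · calc f (a • x + b • y) ^ 2 < (a * f x + b * f y) ^ 2 :=
          pow_lt_pow_left₀ (hlevel x hx y hy hxy heq ha hb hab) hmid two_ne_zero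
      _ ≤ a * f x ^ 2 + b * f y ^ 2 := by
          simpa only [smul_eq_mul] using hsq.convexOn.2 trivial trivial ha.le hb.le hab
  · calc f (a • x + b • y) ^ 2 ≤ (a * f x + b * f y) ^ 2 := pow_le_pow_left₀ hmid hcomb 2
      _ < a * f x ^ 2 + b * f y ^ 2 := by
          simpa only [smul_eq_mul] using hsq.2 trivial trivial heq ha hb hab

theorem sq_div_jensen_gap {u₁ u₂ w₁ w₂ a b : ℝ} (hu₁ : u₁ ≠ 0) (hu₂ : u₂ ≠ 0)
    (hu : a * u₁ + b * u₂ ≠ 0) :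
    a * (w₁ ^ 2 / u₁) + b * (w₂ ^ 2 / u₂) - (a * w₁ + b * w₂) ^ 2 / (a * u₁ + b * u₂) =
      a * b * (w₁ * u₂ - w₂ * u₁) ^ 2 / (u₁ * u₂ * (a * u₁ + b * u₂)) := by
  field_simp
  ring

theorem convexOn_sq_div : ConvexOn ℝ {p : ℝ × ℝ | 0 < p.1} fun p => p.2 ^ 2 / p.1 := by
  refine ⟨convex_halfSpace_gt (LinearMap.fst ℝ ℝ ℝ).isLinear 0, ?_⟩
  rintro ⟨u₁, w₁⟩ (hu₁ : 0 < u₁) ⟨u₂, w₂⟩ (hu₂ : 0 < u₂) a b ha hb hab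
  have hu : 0 < a * u₁ + b * u₂ := by
    rcases ha.eq_or_lt with rfl | ha
    · simp_all
    · positivity
  have hgap := sq_div_jensen_gap (w₁ := w₁) (w₂ := w₂) hu₁.ne' hu₂.ne' hu.ne'
  have : 0 ≤ a * b * (w₁ * u₂ - w₂ * u₁) ^ 2 / (u₁ * u₂ * (a * u₁ + b * u₂)) := by positivity
  simp only [Prod.smul_mk, Prod.mk_add_mk, smul_eq_mul]
  linarith

theorem sq_div_jensen_lt {u₁ u₂ w₁ w₂ a b : ℝ} (hu₁ : 0 < u₁) (hu₂ : 0 < u₂) (ha : 0 < a)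
    (hb : 0 < b) (hw : w₁ * u₂ ≠ w₂ * u₁) :
    (a * w₁ + b * w₂) ^ 2 / (a * u₁ + b * u₂) < a * (w₁ ^ 2 / u₁) + b * (w₂ ^ 2 / u₂) := by
  have hu : 0 < a * u₁ + b * u₂ := by positivity
  have hgap := sq_div_jensen_gap (w₁ := w₁) (w₂ := w₂) hu₁.ne' hu₂.ne' hu.ne'
  have := sq_pos_of_ne_zero (sub_ne_zero.mpr hw)
  have : 0 < a * b * (w₁ * u₂ - w₂ * u₁) ^ 2 / (u₁ * u₂ * (a * u₁ + b * u₂)) := by positivity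
  linarith

theorem mul_ne_mul_of_sq_div_eq {u₁ u₂ w₁ w₂ : ℝ} (hu₁ : 0 < u₁) (hw₁ : 0 < w₁) (hu₂ : 0 < u₂)
    (hne : (u₁, w₁) ≠ (u₂, w₂)) (heq : w₁ ^ 2 / u₁ = w₂ ^ 2 / u₂) : w₁ * u₂ ≠ w₂ * u₁ := by
  intro hray
  rw [div_eq_div_iff hu₁.ne' hu₂.ne'] at heq
  have hw : w₁ = w₂ := by
    refine mul_right_cancel₀ (mul_pos hw₁ hu₂).ne' ?_
    linear_combination heq - w₂ * hray
  subst hw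
  exact hne (by rw [mul_left_cancel₀ hw₁.ne' hray])

theorem strictConvexOn_pow_four_div_sq :
    StrictConvexOn ℝ {p : ℝ × ℝ | 0 < p.1 ∧ 0 < p.2} fun p => p.2 ^ 4 / p.1 ^ 2 := by
  have hperp : ConvexOn ℝ {p : ℝ × ℝ | 0 < p.1 ∧ 0 < p.2} fun p => p.2 ^ 2 / p.1 :=
    convexOn_sq_div.subset (fun p hp => hp.1) ((convex_Ioi 0).prod (convex_Ioi 0))
  refine (hperp.strictConvexOn_sq (fun p hp => by have := hp.1; positivity) ?_).congr
    fun p _ => by simp only [div_pow, ← pow_mul]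
  rintro ⟨u₁, w₁⟩ ⟨hu₁, hw₁⟩ ⟨u₂, w₂⟩ ⟨hu₂, -⟩ hne heq a b ha hb -
  simpa only [Prod.smul_mk, Prod.mk_add_mk, smul_eq_mul] using
    sq_div_jensen_lt hu₁ hu₂ ha hb (mul_ne_mul_of_sq_div_eq hu₁ hw₁ hu₂ hne heq)

/-- For real constants `g > 0` and `G > 0`, the function
`(u, w) ↦ g/u + G·w⁴/u²` is strictly convex on the open convex set
`{(u, w) : u > 0, w > 0}`.  (Equivalently, `Ẽ₁ = g·H + G·H²·A_cc` is strictly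
convex in the variables `(H⁻¹, A_cc^{1/4})` on `H > 0`, `A_cc > 0`.) -/
theorem svm_vertical_energy_strictConvex (g G : ℝ) (hg : 0 < g) (hG : 0 < G) :
    StrictConvexOn ℝ {p : ℝ × ℝ | 0 < p.1 ∧ 0 < p.2}
      (fun p : ℝ × ℝ => g / p.1 + G * p.2 ^ 4 / p.1 ^ 2) := by
  have hquad : Convex ℝ {p : ℝ × ℝ | 0 < p.1 ∧ 0 < p.2} := (convex_Ioi 0).prod (convex_Ioi 0)
  have hinv : ConvexOn ℝ {p : ℝ × ℝ | 0 < p.1} fun p => p.1 ^ (-1 : ℤ) :=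
    (convexOn_zpow (𝕜 := ℝ) (-1)).comp_linearMap (LinearMap.fst ℝ ℝ ℝ)
  have hydrostatic := (hinv.subset (fun p hp => hp.1) hquad).smul hg.le
  refine (hydrostatic.add_strictConvexOn (strictConvexOn_pow_four_div_sq.const_mul hG)).congr
    fun p _ => ?_
  simp only [Pi.add_apply, zpow_neg_one, smul_eq_mul]
  ring
end

section
/- Let θ ∈ [0,1], let F₁, F₂ be real 2×2 matrices and let Y₁, Y₂ be symmetric positive-definite real 2×2 matrices. Set F_θ = θ·F₁ + (1−θ)·F₂ and Y_θ = θ·Y₁ + (1−θ)·Y₂ (which is again symmetric positive-definite). Then tr(F_θ · Y_θ^{−1/2} · F_θᵀ) ≤ θ·tr(F₁ · Y₁^{−1/2} · F₁ᵀ) + (1−θ)·tr(F₂ · Y₂^{−1/2} · F₂ᵀ); that is, the map (F, Y) ↦ tr(F · Y^{−1/2} · Fᵀ) is jointly convex on M₂(ℝ) × {symmetric positive-definite 2×2 matrices}. -/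
open Matrix

section Aux
variable {n : Type*} [Fintype n] [DecidableEq n]

private lemma myTrace_nonneg {A : Matrix n n ℝ} (hA : A.PosSemidef) : 0 ≤ A.trace := by
  rw [Matrix.trace]
  refine Finset.sum_nonneg fun i _ => ?_
  have := hA.dotProduct_mulVec_nonneg (Pi.single i 1)
  simpa [Matrix.mulVec, dotProduct, Pi.single_apply] using this

private lemma trace_conj_nonneg {A : Matrix n n ℝ} (hA : A.PosSemidef) (M : Matrix n n ℝ) :
    0 ≤ (M * A * Mᵀ).trace := by
  have h := hA.mul_mul_conjTranspose_same M
  rw [conjTranspose_eq_transpose_of_trivial] at h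
  exact myTrace_nonneg h

private lemma variational {A : Matrix n n ℝ} (hA : A.PosSemidef) (hd : IsUnit A.det)
    (F X : Matrix n n ℝ) :
    2 * (X * Fᵀ).trace - (X * A * Xᵀ).trace ≤ (F * A⁻¹ * Fᵀ).trace := by
  have hAT : Aᵀ = A := by
    have := hA.1.eq
    rwa [conjTranspose_eq_transpose_of_trivial] at this
  have hinvT : A⁻¹ᵀ = A⁻¹ := by rw [transpose_nonsing_inv, hAT]
  have h1 : A * A⁻¹ = 1 := mul_nonsing_inv A hd
  have h2 : A⁻¹ * A = 1 := nonsing_inv_mul A hd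
  have key := trace_conj_nonneg hA (X - F * A⁻¹)
  have expand : (X - F * A⁻¹) * A * (X - F * A⁻¹)ᵀ
      = X * A * Xᵀ - X * Fᵀ - F * Xᵀ + F * A⁻¹ * Fᵀ := by
    rw [transpose_sub, transpose_mul, hinvT]
    simp only [sub_mul, mul_sub, Matrix.mul_assoc]
    rw [show A⁻¹ * (A * (A⁻¹ * Fᵀ)) = A⁻¹ * Fᵀ by rw [← Matrix.mul_assoc A, h1, Matrix.one_mul],
        show A * (A⁻¹ * Fᵀ) = Fᵀ by rw [← Matrix.mul_assoc, h1, Matrix.one_mul],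
        show A⁻¹ * (A * Xᵀ) = Xᵀ by rw [← Matrix.mul_assoc, h2, Matrix.one_mul]]
    abel
  rw [expand] at key
  have hFX : (F * Xᵀ).trace = (X * Fᵀ).trace := by
    rw [← trace_transpose (X * Fᵀ), transpose_mul, transpose_transpose]
  simp only [trace_add, trace_sub, hFX] at key
  linarith

private lemma sub_posSemidef_of_sq {S T : Matrix n n ℝ} (hS : S.PosSemidef) (hT : T.PosSemidef)
    (h : (T * T - S * S).PosSemidef) : (T - S).PosSemidef := by
  have hD : (T - S).IsHermitian := hT.1.sub hS.1
  have hDT : (T - S)ᵀ = T - S := by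
    have := hD.eq; rwa [conjTranspose_eq_transpose_of_trivial] at this
  rw [hD.posSemidef_iff_eigenvalues_nonneg]
  intro i
  set lam := hD.eigenvalues i with hlam
  set v : n → ℝ := ⇑(hD.eigenvectorBasis i) with hv
  have hvne : v ≠ 0 := by
    have := hD.eigenvectorBasis.orthonormal.ne_zero i
    intro hc
    apply this
    ext j
    exact congrFun hc j
  have heig : (T - S) *ᵥ v = lam • v := hD.mulVec_eigenvectorBasis i
  have key : 0 ≤ v ⬝ᵥ (T * T - S * S) *ᵥ v := by
    have := h.dotProduct_mulVec_nonneg v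
    simpa using this
  have split : T * T - S * S = T * (T - S) + (T - S) * S := by noncomm_ring
  have ha : 0 ≤ v ⬝ᵥ T *ᵥ v := by simpa using hT.dotProduct_mulVec_nonneg v
  have hb : 0 ≤ v ⬝ᵥ S *ᵥ v := by simpa using hS.dotProduct_mulVec_nonneg v
  have hkey2 : 0 ≤ lam * (v ⬝ᵥ T *ᵥ v) + lam * (v ⬝ᵥ S *ᵥ v) := by
    have e1 : v ⬝ᵥ (T * (T - S)) *ᵥ v = lam * (v ⬝ᵥ T *ᵥ v) := by
      rw [← mulVec_mulVec, heig, mulVec_smul, dotProduct_smul]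
      simp [mul_comm]
    have e2 : v ⬝ᵥ ((T - S) * S) *ᵥ v = lam * (v ⬝ᵥ S *ᵥ v) := by
      rw [← mulVec_mulVec, dotProduct_mulVec, ← mulVec_transpose, hDT, heig,
        smul_dotProduct]
      simp [smul_eq_mul]
    rw [split, add_mulVec, dotProduct_add, e1, e2] at key
    exact key
  by_contra hneg
  push_neg at hneg
  replace hneg : lam < 0 := hneg
  have hab : v ⬝ᵥ T *ᵥ v + v ⬝ᵥ S *ᵥ v ≤ 0 := by nlinarith
  have haz : v ⬝ᵥ T *ᵥ v = 0 := by linarith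
  have hbz : v ⬝ᵥ S *ᵥ v = 0 := by linarith
  have hTv : T *ᵥ v = 0 := (hT.dotProduct_mulVec_zero_iff v).mp (by simpa using haz)
  have hSv : S *ᵥ v = 0 := (hS.dotProduct_mulVec_zero_iff v).mp (by simpa using hbz)
  have : lam • v = 0 := by rw [← heig, sub_mulVec, hTv, hSv, sub_zero]
  rcases smul_eq_zero.mp this with h0 | h0
  · exact absurd h0 (by linarith)
  · exact hvne h0

omit [DecidableEq n] in
private lemma smul_posSemidef {c : ℝ} (hc : 0 ≤ c) {A : Matrix n n ℝ} (hA : A.PosSemidef) :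
    (c • A).PosSemidef := by
  refine .of_dotProduct_mulVec_nonneg ?_ fun x => ?_
  · have := hA.1.eq
    rw [conjTranspose_eq_transpose_of_trivial] at this
    simp [IsHermitian, conjTranspose_smul, conjTranspose_eq_transpose_of_trivial, this]
  · rw [smul_mulVec, dotProduct_smul, smul_eq_mul]
    exact mul_nonneg hc (hA.dotProduct_mulVec_nonneg x)

omit [DecidableEq n] in
private lemma conv_posDef {θ : ℝ} (hθ0 : 0 ≤ θ) (hθ1 : θ ≤ 1) {Y₁ Y₂ : Matrix n n ℝ}
    (hY₁ : Y₁.PosDef) (hY₂ : Y₂.PosDef) : (θ • Y₁ + (1 - θ) • Y₂).PosDef := by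
  rcases eq_or_lt_of_le hθ0 with h | h
  · simpa [← h] using hY₂
  · have h1 : (θ • Y₁).PosDef := by
      refine .of_dotProduct_mulVec_pos (smul_posSemidef hθ0 hY₁.posSemidef).1 fun x hx => ?_
      rw [smul_mulVec, dotProduct_smul, smul_eq_mul]
      exact mul_pos h (hY₁.dotProduct_mulVec_pos hx)
    exact h1.add_posSemidef (smul_posSemidef (by linarith) hY₂.posSemidef)

end Aux

/- For a symmetric positive-semidefinite matrix `Y`, its unique positive square
root is `h.sqrt`; `invSqrt Y := (Y^{1/2})⁻¹` (junk value `0` if `Y` is not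
positive semidefinite). -/
open scoped Classical MatrixOrder in
noncomputable def invSqrt (Y : Matrix (Fin 2) (Fin 2) ℝ) : Matrix (Fin 2) (Fin 2) ℝ :=
  if h : Y.PosSemidef then (CFC.sqrt Y)⁻¹ else 0

open scoped MatrixOrder in
private lemma invSqrt_eq {Y : Matrix (Fin 2) (Fin 2) ℝ} (hY : Y.PosSemidef) :
    invSqrt Y = (CFC.sqrt Y)⁻¹ := by
  rw [invSqrt, dif_pos hY]

open scoped MatrixOrder

/-- For `θ ∈ [0,1]`, `F₁ F₂` real 2×2 matrices and `Y₁ Y₂`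
symmetric positive-definite real 2×2 matrices, with `F_θ = θF₁ + (1−θ)F₂` and
`Y_θ = θY₁ + (1−θ)Y₂`, one has
`tr(F_θ Y_θ^{−1/2} F_θᵀ) ≤ θ tr(F₁ Y₁^{−1/2} F₁ᵀ) + (1−θ) tr(F₂ Y₂^{−1/2} F₂ᵀ)`:
the map `(F, Y) ↦ tr(F Y^{−1/2} Fᵀ)` is jointly convex on `M₂(ℝ) × SPD₂`. -/
theorem trace_invSqrt_jointly_convex (θ : ℝ) (hθ0 : 0 ≤ θ) (hθ1 : θ ≤ 1)
    (F₁ F₂ Y₁ Y₂ : Matrix (Fin 2) (Fin 2) ℝ)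
    (hY₁ : Y₁.PosDef) (hY₂ : Y₂.PosDef) :
    Matrix.trace ((θ • F₁ + (1 - θ) • F₂) * invSqrt (θ • Y₁ + (1 - θ) • Y₂) *
        (θ • F₁ + (1 - θ) • F₂)ᵀ)
      ≤ θ * Matrix.trace (F₁ * invSqrt Y₁ * F₁ᵀ)
        + (1 - θ) * Matrix.trace (F₂ * invSqrt Y₂ * F₂ᵀ) := by
  have hθ1' : (0:ℝ) ≤ 1 - θ := by linarith
  set Fθ := θ • F₁ + (1 - θ) • F₂ with hFθ
  have hYθ : (θ • Y₁ + (1 - θ) • Y₂).PosDef := conv_posDef hθ0 hθ1 hY₁ hY₂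
  set A₁ := CFC.sqrt Y₁ with hA₁def
  set A₂ := CFC.sqrt Y₂ with hA₂def
  set T := CFC.sqrt (θ • Y₁ + (1 - θ) • Y₂) with hTdef
  have hA₁psd : A₁.PosSemidef := nonneg_iff_posSemidef.mp (CFC.sqrt_nonneg _)
  have hA₂psd : A₂.PosSemidef := nonneg_iff_posSemidef.mp (CFC.sqrt_nonneg _)
  have hTpsd : T.PosSemidef := nonneg_iff_posSemidef.mp (CFC.sqrt_nonneg _)
  have hA₁sq : A₁ * A₁ = Y₁ := CFC.sqrt_mul_sqrt_self _ hY₁.posSemidef.nonneg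
  have hA₂sq : A₂ * A₂ = Y₂ := CFC.sqrt_mul_sqrt_self _ hY₂.posSemidef.nonneg
  have hTsq : T * T = θ • Y₁ + (1 - θ) • Y₂ := CFC.sqrt_mul_sqrt_self _ hYθ.posSemidef.nonneg
  have hA₁det : IsUnit A₁.det := by
    have h : A₁.det * A₁.det = Y₁.det := by rw [← det_mul, hA₁sq]
    have := hY₁.det_pos
    exact isUnit_iff_ne_zero.mpr (by nlinarith)
  have hA₂det : IsUnit A₂.det := by
    have h : A₂.det * A₂.det = Y₂.det := by rw [← det_mul, hA₂sq]
    have := hY₂.det_pos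
    exact isUnit_iff_ne_zero.mpr (by nlinarith)
  have hTdet : IsUnit T.det := by
    have h : T.det * T.det = (θ • Y₁ + (1 - θ) • Y₂).det := by rw [← det_mul, hTsq]
    have := hYθ.det_pos
    exact isUnit_iff_ne_zero.mpr (by nlinarith)
  rw [invSqrt_eq hYθ.posSemidef, invSqrt_eq hY₁.posSemidef, invSqrt_eq hY₂.posSemidef]
  rw [← hA₁def, ← hA₂def, ← hTdef]
  -- transpose facts
  have hTT : Tᵀ = T := by
    have := hTpsd.1.eq; rwa [conjTranspose_eq_transpose_of_trivial] at this
  have hTinvT : T⁻¹ᵀ = T⁻¹ := by rw [transpose_nonsing_inv, hTT]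
  -- the midpoint of square roots
  set S := θ • A₁ + (1 - θ) • A₂ with hSdef
  have hSpsd : S.PosSemidef := (smul_posSemidef hθ0 hA₁psd).add (smul_posSemidef hθ1' hA₂psd)
  -- T*T - S*S is PSD
  have hsq : T * T - S * S = (θ * (1 - θ)) • ((A₁ - A₂) * (A₁ - A₂)) := by
    rw [hTsq, ← hA₁sq, ← hA₂sq, hSdef]
    simp only [add_mul, mul_add, sub_mul, mul_sub, smul_mul_assoc, mul_smul_comm,
      smul_smul, smul_sub, smul_add]
    module
  have hdiffpsd : ((A₁ - A₂) * (A₁ - A₂)).PosSemidef := by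
    have hAs : (A₁ - A₂)ᵀ = A₁ - A₂ := by
      have := (hA₁psd.1.sub hA₂psd.1).eq
      rwa [conjTranspose_eq_transpose_of_trivial] at this
    have := posSemidef_conjTranspose_mul_self (A₁ - A₂)
    rwa [conjTranspose_eq_transpose_of_trivial, hAs] at this
  have hTSpsd : (T - S).PosSemidef :=
    sub_posSemidef_of_sq hSpsd hTpsd
      (by rw [hsq]; exact smul_posSemidef (mul_nonneg hθ0 hθ1') hdiffpsd)
  -- the optimal X
  set X := Fθ * T⁻¹ with hXdef
  have hXT : X * T * Xᵀ = Fθ * T⁻¹ * Fθᵀ := by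
    rw [hXdef, transpose_mul, hTinvT, Matrix.mul_assoc (Fθ * T⁻¹),
      show T * (T⁻¹ * Fθᵀ) = Fθᵀ by rw [← Matrix.mul_assoc, mul_nonsing_inv T hTdet, Matrix.one_mul],
      Matrix.mul_assoc]
  have hXF : X * Fθᵀ = Fθ * T⁻¹ * Fθᵀ := by rw [hXdef, Matrix.mul_assoc]
  have eq1 : (Fθ * T⁻¹ * Fθᵀ).trace = 2 * (X * Fθᵀ).trace - (X * T * Xᵀ).trace := by
    rw [hXT, hXF]; ring
  -- step 2 : replace T by S
  have step2 : (X * S * Xᵀ).trace ≤ (X * T * Xᵀ).trace := by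
    have h0 := trace_conj_nonneg hTSpsd X
    have hsplit : X * (T - S) * Xᵀ = X * T * Xᵀ - X * S * Xᵀ := by noncomm_ring
    rw [hsplit, trace_sub] at h0
    linarith
  -- splittings
  have splitS : (X * S * Xᵀ).trace = θ * (X * A₁ * Xᵀ).trace + (1 - θ) * (X * A₂ * Xᵀ).trace := by
    have : X * S * Xᵀ = θ • (X * A₁ * Xᵀ) + (1 - θ) • (X * A₂ * Xᵀ) := by
      rw [hSdef]
      simp only [mul_add, add_mul, smul_mul_assoc, mul_smul_comm]
    rw [this, trace_add, trace_smul, trace_smul, smul_eq_mul, smul_eq_mul]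
  have splitF : (X * Fθᵀ).trace = θ * (X * F₁ᵀ).trace + (1 - θ) * (X * F₂ᵀ).trace := by
    have : X * Fθᵀ = θ • (X * F₁ᵀ) + (1 - θ) • (X * F₂ᵀ) := by
      rw [hFθ, transpose_add, transpose_smul, transpose_smul]
      simp only [mul_add, smul_mul_assoc, mul_smul_comm]
    rw [this, trace_add, trace_smul, trace_smul, smul_eq_mul, smul_eq_mul]
  have v₁ := variational hA₁psd hA₁det F₁ X
  have v₂ := variational hA₂psd hA₂det F₂ X
  have b₁ := mul_le_mul_of_nonneg_left v₁ hθ0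
  have b₂ := mul_le_mul_of_nonneg_left v₂ hθ1'
  rw [eq1, splitF]
  nlinarith [b₁, b₂, splitS, step2]
end

section
/- Let H : ℝ × ℝ² → ℝ, U : ℝ × ℝ² → ℝ² and F : ℝ × ℝ² → M₂(ℝ) be C² fields (components U^i, F^i_α, i ∈ {1,2} labelling spatial directions and α ∈ {1,2} labelling material directions) satisfying, for every i and α, the conservation law ∂_t(H F^i_α) + Σ_j ∂_{x_j}( H U^j F^i_α − H F^j_α U^i ) = 0. Then for each α the Piola quantity P_α := Σ_j ∂_{x_j}( H F^j_α ) is independent of time: ∂_t P_α = 0 everywhere. -/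
/-- Partial derivative in time `∂_t f` of a field on `ℝ_t × ℝ²_x`. -/
noncomputable def pt (f : ℝ × (Fin 2 → ℝ) → ℝ) (x : ℝ × (Fin 2 → ℝ)) : ℝ :=
  fderiv ℝ f x (1, 0)

/-- Partial derivative in the `j`-th space direction `∂_{x_j} f`. -/
noncomputable def px (j : Fin 2) (f : ℝ × (Fin 2 → ℝ) → ℝ) (x : ℝ × (Fin 2 → ℝ)) : ℝ :=
  fderiv ℝ f x (0, Pi.single j 1)

section Aux

/-- A directional derivative of a C² function is C¹. -/
lemma contDiff_pd {f : ℝ × (Fin 2 → ℝ) → ℝ} (hf : ContDiff ℝ 2 f) (v : ℝ × (Fin 2 → ℝ)) :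
    ContDiff ℝ 1 fun y => fderiv ℝ f y v :=
  (ContinuousLinearMap.apply ℝ ℝ v).contDiff.comp (hf.fderiv_right (by norm_num))

lemma diff_pd {f : ℝ × (Fin 2 → ℝ) → ℝ} (hf : ContDiff ℝ 2 f) (v : ℝ × (Fin 2 → ℝ)) :
    Differentiable ℝ fun y => fderiv ℝ f y v :=
  (contDiff_pd hf v).differentiable one_ne_zero

/-- Clairaut / Schwarz: mixed directional derivatives of a C² function commute. -/
lemma swap_pd {f : ℝ × (Fin 2 → ℝ) → ℝ} (hf : ContDiff ℝ 2 f) (x v w : ℝ × (Fin 2 → ℝ)) :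
    fderiv ℝ (fun y => fderiv ℝ f y v) x w = fderiv ℝ (fun y => fderiv ℝ f y w) x v := by
  have hd : DifferentiableAt ℝ (fderiv ℝ f) x :=
    ((hf.fderiv_right (m := 1) (by norm_num)).differentiable one_ne_zero).differentiableAt
  have key : ∀ u : ℝ × (Fin 2 → ℝ), fderiv ℝ (fun y => fderiv ℝ f y u) x
      = (fderiv ℝ (fderiv ℝ f) x).flip u := by
    intro u
    have h := fderiv_clm_apply (c := fderiv ℝ f) hd (differentiableAt_const u)
    simpa using h
  rw [key, key]
  simp only [ContinuousLinearMap.flip_apply]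
  exact (hf.contDiffAt.isSymmSndFDerivAt (by norm_num)) w v

end Aux

/-- Piola identities are involutions. Let `H`, `U`, `F` be C²
fields on `ℝ_t × ℝ²_x` satisfying, for all `i, α`, the conservation law
`∂_t(H F^i_α) + Σ_j ∂_{x_j}(H U^j F^i_α − H F^j_α U^i) = 0`.  Then for each `α`
the Piola quantity `P_α = Σ_j ∂_{x_j}(H F^j_α)` satisfies `∂_t P_α = 0`
everywhere. -/
theorem piola_involution (H : ℝ × (Fin 2 → ℝ) → ℝ) (U : ℝ × (Fin 2 → ℝ) → Fin 2 → ℝ)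
    (F : ℝ × (Fin 2 → ℝ) → Fin 2 → Fin 2 → ℝ)
    (hH : ContDiff ℝ 2 H) (hU : ContDiff ℝ 2 U) (hF : ContDiff ℝ 2 F)
    (heq : ∀ i α : Fin 2, ∀ x,
      pt (fun y => H y * F y i α) x
        + ∑ j, px j (fun y => H y * U y j * F y i α - H y * F y j α * U y i) x = 0) :
    ∀ α : Fin 2, ∀ x,
      pt (fun y => ∑ j, px j (fun z => H z * F z j α) y) x = 0 := by
  intro α x
  -- components are C²
  have hUc : ∀ j : Fin 2, ContDiff ℝ 2 fun y => U y j := fun j => contDiff_pi.1 hU j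
  have hFc : ∀ i β : Fin 2, ContDiff ℝ 2 fun y => F y i β := fun i β =>
    contDiff_pi.1 (contDiff_pi.1 hF i) β
  set et : ℝ × (Fin 2 → ℝ) := (1, 0) with het
  set ev : Fin 2 → ℝ × (Fin 2 → ℝ) := fun j => (0, Pi.single j 1) with hev
  set g : Fin 2 → (ℝ × (Fin 2 → ℝ)) → ℝ := fun j y => H y * F y j α with hgdef
  set A : Fin 2 → Fin 2 → (ℝ × (Fin 2 → ℝ)) → ℝ :=
    fun i j y => H y * U y j * F y i α - H y * F y j α * U y i with hAdef
  have hg : ∀ j, ContDiff ℝ 2 (g j) := fun j => hH.mul (hFc j α)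
  have hA : ∀ i j, ContDiff ℝ 2 (A i j) := fun i j =>
    ((hH.mul (hUc j)).mul (hFc i α)).sub ((hH.mul (hFc j α)).mul (hUc i))
  -- the double second-derivative array
  set T : Fin 2 → Fin 2 → ℝ :=
    fun j k => fderiv ℝ (fun y => fderiv ℝ (A j k) y (ev k)) x (ev j) with hTdef
  -- antisymmetry of T
  have hanti : ∀ j k, T j k = -T k j := by
    intro j k
    have hAanti : A j k = fun y => -(A k j y) := by
      funext y; simp only [hAdef]; ring
    have h1 : (fun y => fderiv ℝ (A j k) y (ev j))
        = fun y => -(fderiv ℝ (A k j) y (ev j)) := by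
      funext y
      rw [hAanti, fderiv_fun_neg]
      simp
    calc T j k = fderiv ℝ (fun y => fderiv ℝ (A j k) y (ev j)) x (ev k) :=
          swap_pd (hA j k) x (ev k) (ev j)
      _ = fderiv ℝ (fun y => -(fderiv ℝ (A k j) y (ev j))) x (ev k) := by rw [h1]
      _ = -fderiv ℝ (fun y => fderiv ℝ (A k j) y (ev j)) x (ev k) := by
          rw [fderiv_fun_neg]; simp
      _ = -T k j := rfl
  -- hence the total double sum vanishes
  have hS : (∑ j, ∑ k, T j k) = 0 := by
    have h1 : (∑ j, ∑ k, T j k) = ∑ k, ∑ j, T j k := Finset.sum_comm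
    have h2 : (∑ k : Fin 2, ∑ j : Fin 2, T j k) = -∑ j, ∑ k, T j k := by
      rw [← Finset.sum_neg_distrib]
      refine Finset.sum_congr rfl fun k _ => ?_
      rw [← Finset.sum_neg_distrib]
      refine Finset.sum_congr rfl fun j _ => ?_
      rw [hanti j k]
    linarith [h1, h2]
  -- now compute the goal
  simp only [pt, px]
  have hsum : fderiv ℝ (fun y => ∑ j, fderiv ℝ (g j) y (ev j)) x et
      = ∑ j, fderiv ℝ (fun y => fderiv ℝ (g j) y (ev j)) x et := by
    rw [fderiv_fun_sum fun j _ => (diff_pd (hg j) (ev j)).differentiableAt]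
    simp
  have hterm : ∀ j, fderiv ℝ (fun y => fderiv ℝ (g j) y (ev j)) x et = -∑ k, T j k := by
    intro j
    have hswap : fderiv ℝ (fun y => fderiv ℝ (g j) y (ev j)) x et
        = fderiv ℝ (fun y => fderiv ℝ (g j) y et) x (ev j) := swap_pd (hg j) x (ev j) et
    have hcons : (fun y => fderiv ℝ (g j) y et)
        = fun y => -∑ k, fderiv ℝ (A j k) y (ev k) := by
      funext y
      have := heq j α y
      simp only [pt, px] at this
      have hg' : fderiv ℝ (g j) y et = pt (g j) y := rfl
      simp only [pt, px, hgdef, hAdef]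
      linarith [this]
    rw [hswap, hcons, fderiv_fun_neg]
    rw [show (-fderiv ℝ (fun y => ∑ k, fderiv ℝ (A j k) y (ev k)) x) (ev j)
        = -(fderiv ℝ (fun y => ∑ k, fderiv ℝ (A j k) y (ev k)) x (ev j)) from rfl]
    rw [fderiv_fun_sum fun k _ => (diff_pd (hA j k) (ev k)).differentiableAt]
    simp [hTdef]
  calc fderiv ℝ (fun y => ∑ j, fderiv ℝ (g j) y (ev j)) x et
      = ∑ j, fderiv ℝ (fun y => fderiv ℝ (g j) y (ev j)) x et := hsum
    _ = ∑ j, -∑ k, T j k := Finset.sum_congr rfl fun j _ => hterm j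
    _ = -∑ j, ∑ k, T j k := by rw [Finset.sum_neg_distrib]
    _ = 0 := by rw [hS, neg_zero]
end

section
/- Let H : ℝ × ℝ² → ℝ with H > 0, U : ℝ × ℝ² → ℝ², and F : ℝ × ℝ² → M₂(ℝ) with F pointwise invertible, all C¹, satisfying the continuity equation ∂_t H + div(H U) = 0 and the transport-stretching equation ∂_t F + (U·∇)F = (∇U)·F, where (∇U)^i_j = ∂_{x_j} U^i. Then the scalar field w := H·det(F) satisfies the pure transport equation ∂_t w + (U·∇) w = 0. In particular the constraint H = (det F)⁻¹, i.e. w ≡ 1, is compatible with the evolution. -/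
lemma fderiv_mul_apply' {f g : ℝ × (Fin 2 → ℝ) → ℝ} {x : ℝ × (Fin 2 → ℝ)}
    (hf : DifferentiableAt ℝ f x) (hg : DifferentiableAt ℝ g x) (v : ℝ × (Fin 2 → ℝ)) :
    fderiv ℝ (fun y => f y * g y) x v = fderiv ℝ f x v * g x + f x * fderiv ℝ g x v := by
  rw [fderiv_fun_mul hf hg]
  simp only [ContinuousLinearMap.add_apply, ContinuousLinearMap.smul_apply, smul_eq_mul]
  ring

lemma fderiv_sub_apply' {f g : ℝ × (Fin 2 → ℝ) → ℝ} {x : ℝ × (Fin 2 → ℝ)}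
    (hf : DifferentiableAt ℝ f x) (hg : DifferentiableAt ℝ g x) (v : ℝ × (Fin 2 → ℝ)) :
    fderiv ℝ (fun y => f y - g y) x v = fderiv ℝ f x v - fderiv ℝ g x v := by
  rw [fderiv_fun_sub hf hg]; simp

lemma pt_mul {f g : ℝ × (Fin 2 → ℝ) → ℝ} (hf : Differentiable ℝ f) (hg : Differentiable ℝ g)
    (x : ℝ × (Fin 2 → ℝ)) :
    pt (fun y => f y * g y) x = pt f x * g x + f x * pt g x :=
  fderiv_mul_apply' (hf x) (hg x) _

lemma px_mul {f g : ℝ × (Fin 2 → ℝ) → ℝ} (hf : Differentiable ℝ f) (hg : Differentiable ℝ g)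
    (j : Fin 2) (x : ℝ × (Fin 2 → ℝ)) :
    px j (fun y => f y * g y) x = px j f x * g x + f x * px j g x :=
  fderiv_mul_apply' (hf x) (hg x) _

lemma pt_sub {f g : ℝ × (Fin 2 → ℝ) → ℝ} (hf : Differentiable ℝ f) (hg : Differentiable ℝ g)
    (x : ℝ × (Fin 2 → ℝ)) :
    pt (fun y => f y - g y) x = pt f x - pt g x :=
  fderiv_sub_apply' (hf x) (hg x) _

lemma px_sub {f g : ℝ × (Fin 2 → ℝ) → ℝ} (hf : Differentiable ℝ f) (hg : Differentiable ℝ g)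
    (j : Fin 2) (x : ℝ × (Fin 2 → ℝ)) :
    px j (fun y => f y - g y) x = px j f x - px j g x :=
  fderiv_sub_apply' (hf x) (hg x) _

/-- Let `H > 0`, `U`, and `F` (pointwise invertible) be C¹
fields on `ℝ_t × ℝ²_x` satisfying the continuity equation `∂_t H + div(HU) = 0`
and the transport-stretching equation `∂_t F + (U·∇)F = (∇U)·F`.  Then
`w := H·det F` satisfies the pure transport equation `∂_t w + (U·∇)w = 0`:
the constraint `H = (det F)⁻¹`, i.e. `w ≡ 1`, is compatible with the
evolution. -/
theorem hdetF_transported (H : ℝ × (Fin 2 → ℝ) → ℝ) (U : ℝ × (Fin 2 → ℝ) → Fin 2 → ℝ)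
    (F : ℝ × (Fin 2 → ℝ) → Fin 2 → Fin 2 → ℝ)
    (hH : ContDiff ℝ 1 H) (hU : ContDiff ℝ 1 U) (hF : ContDiff ℝ 1 F)
    (hHpos : ∀ x, 0 < H x)
    (hFinv : ∀ x, (Matrix.of (F x)).det ≠ 0)
    (hmass : ∀ x, pt H x + ∑ j, px j (fun y => H y * U y j) x = 0)
    (hstretch : ∀ i α : Fin 2, ∀ x,
      pt (fun y => F y i α) x + ∑ j, U x j * px j (fun y => F y i α) x
        = ∑ j, px j (fun y => U y i) x * F x j α) :
    ∀ x, pt (fun y => H y * (Matrix.of (F y)).det) x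
      + ∑ j, U x j * px j (fun y => H y * (Matrix.of (F y)).det) x = 0 := by
  have hHd : Differentiable ℝ H := hH.differentiable one_ne_zero
  have hUd : ∀ j, Differentiable ℝ fun y => U y j :=
    differentiable_pi.mp (hU.differentiable one_ne_zero)
  have hFd : ∀ i α, Differentiable ℝ fun y => F y i α := fun i =>
    differentiable_pi.mp (differentiable_pi.mp (hF.differentiable one_ne_zero) i)
  intro x
  have hdet : ∀ y : ℝ × (Fin 2 → ℝ),
      (Matrix.of (F y)).det = F y 0 0 * F y 1 1 - F y 0 1 * F y 1 0 := fun y => by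
    simp [Matrix.det_fin_two]
  have hprod : ∀ i α i' α', Differentiable ℝ fun y => F y i α * F y i' α' :=
    fun i α i' α' => (hFd i α).mul (hFd i' α')
  have hdetd : Differentiable ℝ fun y => F y 0 0 * F y 1 1 - F y 0 1 * F y 1 0 :=
    (hprod 0 0 1 1).sub (hprod 0 1 1 0)
  simp only [hdet, Fin.sum_univ_two]
  rw [pt_mul hHd hdetd, px_mul hHd hdetd, px_mul hHd hdetd,
    pt_sub (hprod 0 0 1 1) (hprod 0 1 1 0), px_sub (hprod 0 0 1 1) (hprod 0 1 1 0),
    px_sub (hprod 0 0 1 1) (hprod 0 1 1 0),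
    pt_mul (hFd 0 0) (hFd 1 1), pt_mul (hFd 0 1) (hFd 1 0),
    px_mul (hFd 0 0) (hFd 1 1), px_mul (hFd 0 1) (hFd 1 0),
    px_mul (hFd 0 0) (hFd 1 1), px_mul (hFd 0 1) (hFd 1 0)]
  have hm := hmass x
  rw [Fin.sum_univ_two, px_mul hHd (hUd 0), px_mul hHd (hUd 1)] at hm
  have hs00 := hstretch 0 0 x
  have hs01 := hstretch 0 1 x
  have hs10 := hstretch 1 0 x
  have hs11 := hstretch 1 1 x
  simp only [Fin.sum_univ_two] at hs00 hs01 hs10 hs11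
  linear_combination (F x 0 0 * F x 1 1 - F x 0 1 * F x 1 0) * hm
    + H x * (F x 1 1 * hs00 - F x 1 0 * hs01 - F x 0 1 * hs10 + F x 0 0 * hs11)
end

section
/- Let d ≥ 1 and let C ⊆ ℝ^d be a nonempty closed convex set. Let q_i ∈ C; for j = 1,…,N let ℓ_j > 0 (interface lengths), let |V| > 0 (cell area), let O_j : ℝ^d → ℝ^d be invertible linear maps with O_j(C) = C, let s_j > 0, and let R_j : ℝ → ℝ^d be bounded measurable functions with R_j(ξ) ∈ C for almost every ξ and R_j(ξ) = O_j⁻¹ q_i for all ξ < −s_j. Let F : ℝ^d → ℝ^d satisfy the closed-cell compatibility condition Σ_j ℓ_j · O_j( F(O_j⁻¹ q_i) ) = 0. Define the numerical fluxes F_j := O_j( F(O_j⁻¹ q_i) − ∫_{−s_j}^0 ( R_j(ξ) − O_j⁻¹ q_i ) dξ ) and, for τ > 0, the updated state q' := q_i − τ · Σ_j (ℓ_j/|V|) · F_j. If the CFL condition τ · Σ_j ℓ_j s_j / |V| ≤ 1 holds, then q' ∈ C. -/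
open MeasureTheory

/-- domain preservation of the Finite-Volume update.
`C ⊆ ℝ^d` is a nonempty closed convex admissibility domain, `q_i ∈ C`,
`ℓ_j > 0` are interface lengths, `|V| > 0` the cell area, `O_j` invertible
linear maps with `O_j(C) = C`, `s_j > 0` wave-speed bounds, `R_j` bounded
measurable Riemann solvers valued a.e. in `C` with `R_j(ξ) = O_j⁻¹ q_i` for
`ξ < −s_j`, and `F` a flux with the closed-cell compatibility
`Σ_j ℓ_j O_j(F(O_j⁻¹ q_i)) = 0`.  If the CFL condition
`τ Σ_j ℓ_j s_j / |V| ≤ 1` holds, then the updated state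
`q' = q_i − τ Σ_j (ℓ_j/|V|) F_j`, with numerical fluxes
`F_j = O_j( F(O_j⁻¹ q_i) − ∫_{−s_j}^0 (R_j(ξ) − O_j⁻¹ q_i) dξ )`,
remains in `C`. -/
theorem fv_update_mem_domain (d N : ℕ)
    (C : Set (Fin d → ℝ)) (hCne : C.Nonempty) (hCcl : IsClosed C) (hCconv : Convex ℝ C)
    (qi : Fin d → ℝ) (hqi : qi ∈ C)
    (ℓ : Fin N → ℝ) (hℓ : ∀ j, 0 < ℓ j) (V : ℝ) (hV : 0 < V)
    (O : Fin N → (Fin d → ℝ) ≃ₗ[ℝ] (Fin d → ℝ)) (hO : ∀ j, (O j) '' C = C)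
    (s : Fin N → ℝ) (hs : ∀ j, 0 < s j)
    (R : Fin N → ℝ → (Fin d → ℝ))
    (hRmeas : ∀ j, Measurable (R j))
    (hRbdd : ∀ j, ∃ M, ∀ ξ, ‖R j ξ‖ ≤ M)
    (hRC : ∀ j, ∀ᵐ ξ : ℝ, R j ξ ∈ C)
    (hRleft : ∀ j, ∀ ξ < -(s j), R j ξ = (O j).symm qi)
    (F : (Fin d → ℝ) → (Fin d → ℝ))
    (hcomp : ∑ j, ℓ j • (O j) (F ((O j).symm qi)) = 0)
    (τ : ℝ) (hτ : 0 < τ)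
    (hCFL : τ * ∑ j, ℓ j * s j / V ≤ 1) :
    qi - τ • ∑ j, (ℓ j / V) •
        (O j) (F ((O j).symm qi) - ∫ ξ in Set.Ioc (-(s j)) 0, (R j ξ - (O j).symm qi))
      ∈ C := by

  classical
  -- notation
  set t : Fin N → Set ℝ := fun j => Set.Ioc (-(s j)) 0 with ht
  have hvol : ∀ j, (volume (t j)).toReal = s j := by
    intro j
    simp only [ht, Real.volume_Ioc]
    rw [ENNReal.toReal_ofReal (by linarith [hs j])]
    ring
  have hvol0 : ∀ j, volume (t j) ≠ 0 := by
    intro j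
    simp only [ht, Real.volume_Ioc]
    simp only [ne_eq, ENNReal.ofReal_eq_zero, not_le]
    linarith [hs j]
  have hvolT : ∀ j, volume (t j) ≠ ⊤ := fun j => measure_Ioc_lt_top.ne
  -- integrability
  have fInt : ∀ j, IntegrableOn (R j) (t j) := by
    intro j
    obtain ⟨M, hM⟩ := hRbdd j
    exact Measure.integrableOn_of_bounded (hvolT j) (hRmeas j).aestronglyMeasurable
      (Filter.Eventually.of_forall fun x => hM x)
  have gInt : ∀ j, IntegrableOn (fun ξ => (O j) (R j ξ)) (t j) := by
    intro j
    exact ((O j).toContinuousLinearEquiv.toContinuousLinearMap.integrable_comp (fInt j))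
  -- the rotated averages
  set c : Fin N → (Fin d → ℝ) := fun j => (s j)⁻¹ • ∫ ξ in t j, (O j) (R j ξ) with hc
  have hcC : ∀ j, c j ∈ C := by
    intro j
    have hae : ∀ᵐ ξ ∂(volume.restrict (t j)), (O j) (R j ξ) ∈ C := by
      refine ae_restrict_of_ae ((hRC j).mono fun ξ hξ => ?_)
      rw [← hO j]; exact Set.mem_image_of_mem _ hξ
    have := hCconv.set_average_mem hCcl (hvol0 j) (hvolT j) hae (gInt j)
    rwa [setAverage_eq, measureReal_def, hvol] at this
  -- the key identity: O j of the inner integral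
  have hOint : ∀ j, (O j) (∫ ξ in t j, R j ξ) = ∫ ξ in t j, (O j) (R j ξ) := by
    intro j
    have := (O j).toContinuousLinearEquiv.integral_comp_comm (μ := volume.restrict (t j)) (R j)
    simpa using this.symm
  have hsplit : ∀ j, (∫ ξ in t j, (R j ξ - (O j).symm qi)) =
      (∫ ξ in t j, R j ξ) - (s j) • (O j).symm qi := by
    intro j
    rw [integral_sub (fInt j) (integrableOn_const measure_Ioc_lt_top.ne),
      setIntegral_const, measureReal_def, hvol]
  have hIc : ∀ j, (∫ ξ in t j, (O j) (R j ξ)) = (s j) • c j := by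
    intro j
    rw [hc]
    rw [smul_inv_smul₀ (ne_of_gt (hs j))]
  -- per-term identity
  have hterm : ∀ j, (ℓ j / V) •
      (O j) (F ((O j).symm qi) - ∫ ξ in t j, (R j ξ - (O j).symm qi))
      = V⁻¹ • (ℓ j • (O j) (F ((O j).symm qi)))
        + ((ℓ j * s j / V) • qi - (ℓ j * s j / V) • c j) := by
    intro j
    rw [hsplit j, map_sub, map_sub, _root_.map_smul, (O j).apply_symm_apply, hOint j, hIc j]
    match_scalars <;> ring
  -- sum the identity
  set w : Fin N → ℝ := fun j => τ * (ℓ j * s j / V) with hw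
  have hwnonneg : ∀ j, 0 ≤ w j := by
    intro j
    have := hℓ j; have := hs j
    positivity
  have hwsum : ∑ j, w j ≤ 1 := by
    rw [hw]
    calc ∑ j, τ * (ℓ j * s j / V) = τ * ∑ j, ℓ j * s j / V := by rw [Finset.mul_sum]
    _ ≤ 1 := hCFL
  have hsum : (∑ j, (ℓ j / V) •
      (O j) (F ((O j).symm qi) - ∫ ξ in t j, (R j ξ - (O j).symm qi)))
      = (∑ j, ℓ j * s j / V) • qi - ∑ j, (ℓ j * s j / V) • c j := by
    rw [Finset.sum_congr rfl fun j _ => hterm j]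
    rw [Finset.sum_add_distrib, ← Finset.smul_sum, hcomp, smul_zero, zero_add]
    rw [Finset.sum_sub_distrib, ← Finset.sum_smul]
  -- rewrite the goal as a convex combination
  have hgoal : qi - τ • ∑ j, (ℓ j / V) •
      (O j) (F ((O j).symm qi) - ∫ ξ in t j, (R j ξ - (O j).symm qi))
      = (1 - ∑ j, w j) • qi + ∑ j, w j • c j := by
    rw [hsum, hw]
    rw [smul_sub, smul_smul, Finset.mul_sum, Finset.smul_sum]
    rw [Finset.sum_congr rfl (fun j _ => (smul_smul τ (ℓ j * s j / V) (c j)))]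
    rw [sub_smul, one_smul]
    abel
  have final : (1 - ∑ j, w j) • qi + ∑ j, w j • c j ∈ C := by
    have := hCconv.sum_mem (t := (Finset.univ : Finset (Option (Fin N))))
      (w := fun i => Option.elim i (1 - ∑ j, w j) w)
      (z := fun i => Option.elim i qi c)
      (fun i _ => by
        cases i with
        | none => simpa using sub_nonneg.2 hwsum
        | some j => exact hwnonneg j)
      (by rw [Fintype.sum_option]; simp)
      (fun i _ => by
        cases i with
        | none => exact hqi
        | some j => exact hcC j)
    rwa [Fintype.sum_option] at this
  show qi - τ • ∑ j, (ℓ j / V) •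
      (O j) (F ((O j).symm qi) - ∫ ξ in t j, (R j ξ - (O j).symm qi)) ∈ C
  rw [hgoal]
  exact final
end

section
/- In the setting of the Finite-Volume update (C ⊆ ℝ^d nonempty closed convex, q_i ∈ C, weights ℓ_j > 0 and |V| > 0, invertible linear maps O_j with O_j(C) = C, speeds s_j > 0, bounded measurable solvers R_j : ℝ → C with R_j(ξ) = O_j⁻¹ q_i for ξ < −s_j, flux F : ℝ^d → ℝ^d with Σ_j ℓ_j O_j F(O_j⁻¹ q_i) = 0, numerical fluxes F_j := O_j( F(O_j⁻¹ q_i) − ∫_{−s_j}^0 (R_j(ξ) − O_j⁻¹ q_i) dξ ) and update q' := q_i − τ Σ_j (ℓ_j/|V|) F_j), assume in addition: S : ℝ^d → ℝ is convex and continuous with S(O_j q) = S(q) for all q and j; real numbers g_j with Σ_j ℓ_j g_j = 0; real numbers G̃_j with G̃_j ≤ g_j − ∫_{−∞}^0 ( S(R_j(ξ)) − S(O_j⁻¹ q_i) ) dξ for each j (the integrand vanishes for ξ < −s_j); and the stringent CFL condition τ · s · Σ_j ℓ_j / |V| ≤ 1 where s := max_j s_j. Then the discrete entropy inequality holds: S(q')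 ≤ S(q_i) − τ · Σ_j (ℓ_j/|V|) · G̃_j. -/
open MeasureTheory

/-- discrete entropy inequality for the Finite-Volume update.
In the setting of the Finite-Volume update (`C` nonempty closed convex,
`q_i ∈ C`, weights `ℓ_j > 0`, `|V| > 0`, invertible linear maps `O_j` with
`O_j(C) = C`, speeds `s_j > 0`, bounded measurable solvers `R_j` valued a.e. in
`C` with `R_j(ξ) = O_j⁻¹ q_i` for `ξ < −s_j`, flux `F` with
`Σ_j ℓ_j O_j F(O_j⁻¹ q_i) = 0`), assume: `S` convex continuous with
`S(O_j q) = S(q)`; reals `g_j` with `Σ_j ℓ_j g_j = 0`; numerical entropy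
fluxes `G̃_j ≤ g_j − ∫_{−∞}^0 (S(R_j(ξ)) − S(O_j⁻¹ q_i)) dξ`; and the stringent
CFL condition `τ · (max_j s_j) · Σ_j ℓ_j / |V| ≤ 1`. Then
`S(q') ≤ S(q_i) − τ Σ_j (ℓ_j/|V|) G̃_j`. -/
theorem fv_discrete_entropy_inequality (d N : ℕ)
    (C : Set (Fin d → ℝ)) (hCne : C.Nonempty) (hCcl : IsClosed C) (hCconv : Convex ℝ C)
    (qi : Fin d → ℝ) (hqi : qi ∈ C)
    (ℓ : Fin N → ℝ) (hℓ : ∀ j, 0 < ℓ j) (V : ℝ) (hV : 0 < V)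
    (O : Fin N → (Fin d → ℝ) ≃ₗ[ℝ] (Fin d → ℝ)) (hO : ∀ j, (O j) '' C = C)
    (s : Fin N → ℝ) (hs : ∀ j, 0 < s j)
    (R : Fin N → ℝ → (Fin d → ℝ))
    (hRmeas : ∀ j, Measurable (R j))
    (hRbdd : ∀ j, ∃ M, ∀ ξ, ‖R j ξ‖ ≤ M)
    (hRC : ∀ j, ∀ᵐ ξ : ℝ, R j ξ ∈ C)
    (hRleft : ∀ j, ∀ ξ < -(s j), R j ξ = (O j).symm qi)
    (F : (Fin d → ℝ) → (Fin d → ℝ))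
    (hcomp : ∑ j, ℓ j • (O j) (F ((O j).symm qi)) = 0)
    (τ : ℝ) (hτ : 0 < τ)
    (S : (Fin d → ℝ) → ℝ) (hSconv : ConvexOn ℝ Set.univ S) (hScont : Continuous S)
    (hSO : ∀ j q, S ((O j) q) = S q)
    (g : Fin N → ℝ) (hg : ∑ j, ℓ j * g j = 0)
    (Gt : Fin N → ℝ)
    (hGt : ∀ j, Gt j ≤ g j - ∫ ξ in Set.Iic (0 : ℝ), (S (R j ξ) - S ((O j).symm qi)))
    (hCFL : τ * (⨆ j, s j) * (∑ j, ℓ j) / V ≤ 1) :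
    S (qi - τ • ∑ j, (ℓ j / V) •
        (O j) (F ((O j).symm qi) - ∫ ξ in Set.Ioc (-(s j)) 0, (R j ξ - (O j).symm qi)))
      ≤ S qi - τ * ∑ j, (ℓ j / V) * Gt j := by
  classical
  choose M hM using hRbdd
  -- basic facts
  have hS' : ∀ j, S ((O j).symm qi) = S qi := by
    intro j
    have h := hSO j ((O j).symm qi)
    rw [LinearEquiv.apply_symm_apply] at h
    exact h.symm
  -- measurability / integrability
  have hSRmeas : ∀ j, Measurable (fun ξ => S (R j ξ)) := fun j =>
    hScont.measurable.comp (hRmeas j)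
  have hRi : ∀ j, IntegrableOn (R j) (Set.Ioc (-(s j)) 0) volume := by
    intro j
    exact Integrable.mono' (integrable_const (M j))
      ((hRmeas j).aestronglyMeasurable.restrict) (ae_of_all _ (hM j))
  have hOcont : ∀ j, Continuous (O j) := fun j =>
    LinearMap.continuous_of_finiteDimensional ((O j) : (Fin d → ℝ) →ₗ[ℝ] (Fin d → ℝ))
  have hORi : ∀ j, IntegrableOn (fun ξ => (O j) (R j ξ)) (Set.Ioc (-(s j)) 0) volume := by
    intro j
    obtain ⟨B, hB⟩ := (isCompact_closedBall (0 : Fin d → ℝ) (M j)).exists_bound_of_continuousOn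
      (hOcont j).continuousOn
    refine Integrable.mono' (integrable_const B)
      (((hOcont j).measurable.comp (hRmeas j)).aestronglyMeasurable.restrict)
      (ae_of_all _ fun ξ => ?_)
    exact hB _ (Metric.mem_closedBall.2 (by simpa using hM j ξ))
  have hSB : ∀ j, ∃ B, ∀ ξ, ‖S (R j ξ)‖ ≤ B := by
    intro j
    obtain ⟨B, hB⟩ := (isCompact_closedBall (0 : Fin d → ℝ) (M j)).exists_bound_of_continuousOn
      hScont.continuousOn
    exact ⟨B, fun ξ => hB _ (Metric.mem_closedBall.2 (by simpa using hM j ξ))⟩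
  choose B hB using hSB
  have hSRi : ∀ j, IntegrableOn (fun ξ => S (R j ξ)) (Set.Ioc (-(s j)) 0) volume := by
    intro j
    exact Integrable.mono' (integrable_const (B j))
      ((hSRmeas j).aestronglyMeasurable.restrict) (ae_of_all _ (hB j))
  -- the entropy increments
  set A : Fin N → ℝ := fun j => ∫ ξ in Set.Ioc (-(s j)) 0, (S (R j ξ) - S qi) with hA
  have hfIoc : ∀ j, IntegrableOn (fun ξ => S (R j ξ) - S qi) (Set.Ioc (-(s j)) 0) volume :=
    fun j => (hSRi j).sub (integrableOn_const (by simp [Real.volume_Ioc]))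
  have hfIic0 : ∀ j, IntegrableOn (fun ξ => S (R j ξ) - S qi) (Set.Iic (-(s j))) volume := by
    intro j
    have hrw : volume.restrict (Set.Iic (-(s j))) = volume.restrict (Set.Iio (-(s j))) :=
      (Measure.restrict_congr_set Iio_ae_eq_Iic).symm
    unfold IntegrableOn
    rw [hrw]
    refine (integrable_zero _ _ _).congr ?_
    refine (ae_restrict_iff' measurableSet_Iio).2 (ae_of_all _ fun ξ hξ => ?_)
    show (0 : ℝ) = S (R j ξ) - S qi
    rw [hRleft j ξ hξ, hS' j, sub_self]
  have hzIic : ∀ j, (∫ ξ in Set.Iic (-(s j)), (S (R j ξ) - S qi)) = 0 := by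
    intro j
    rw [← setIntegral_congr_set (Iio_ae_eq_Iic (a := -(s j)))]
    rw [setIntegral_congr_fun (g := fun _ => (0:ℝ)) measurableSet_Iio
      (fun ξ hξ => by rw [hRleft j ξ hξ, hS' j, sub_self])]
    simp
  have hIic : ∀ j, (∫ ξ in Set.Iic (0 : ℝ), (S (R j ξ) - S ((O j).symm qi))) = A j := by
    intro j
    have hsplit : Set.Iic (0:ℝ) = Set.Iic (-(s j)) ∪ Set.Ioc (-(s j)) 0 :=
      (Set.Iic_union_Ioc_eq_Iic (by linarith [hs j])).symm
    calc (∫ ξ in Set.Iic (0 : ℝ), (S (R j ξ) - S ((O j).symm qi)))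
        = (∫ ξ in Set.Iic (0 : ℝ), (S (R j ξ) - S qi)) := by simp only [hS' j]
      _ = (∫ ξ in Set.Iic (-(s j)), (S (R j ξ) - S qi))
          + (∫ ξ in Set.Ioc (-(s j)) 0, (S (R j ξ) - S qi)) := by
          rw [hsplit]
          exact setIntegral_union (Set.Iic_disjoint_Ioc le_rfl) measurableSet_Ioc
            (hfIic0 j) (hfIoc j)
      _ = A j := by rw [hzIic j, zero_add]
  -- A j via the set integral of S ∘ R
  have hAeq : ∀ j, A j = (∫ ξ in Set.Ioc (-(s j)) 0, S (R j ξ)) - s j * S qi := by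
    intro j
    simp only [hA]
    rw [integral_sub (hSRi j) (integrableOn_const (by simp [Real.volume_Ioc]))]
    rw [setIntegral_const, measureReal_def, Real.volume_Ioc, smul_eq_mul,
      show (0 : ℝ) - -s j = s j from by ring, ENNReal.toReal_ofReal (hs j).le]
  -- averaged values
  set I : Fin N → (Fin d → ℝ) := fun j => ∫ ξ in Set.Ioc (-(s j)) 0, (O j) (R j ξ) with hI
  -- Jensen for each interface
  have hkey : ∀ j, S ((s j)⁻¹ • I j) ≤ (s j)⁻¹ * ∫ ξ in Set.Ioc (-(s j)) 0, S (R j ξ) := by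
    intro j
    set μ := volume.restrict (Set.Ioc (-(s j)) 0) with hμ
    haveI : NeZero μ := by
      constructor
      rw [hμ, Ne, Measure.restrict_eq_zero, Real.volume_Ioc]
      simp only [ENNReal.ofReal_eq_zero, not_le]
      linarith [hs j]
    have hμuniv : (μ Set.univ).toReal = s j := by
      rw [hμ, Measure.restrict_apply_univ, Real.volume_Ioc,
        ENNReal.toReal_ofReal (by linarith [hs j])]
      ring
    have hfs : ∀ᵐ ξ ∂μ, (O j) (R j ξ) ∈ C := by
      refine (ae_restrict_of_ae (hRC j)).mono fun ξ hξ => ?_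
      rw [← hO j]
      exact Set.mem_image_of_mem _ hξ
    have hgi : Integrable (S ∘ fun ξ => (O j) (R j ξ)) μ := by
      have : (S ∘ fun ξ => (O j) (R j ξ)) = fun ξ => S (R j ξ) := by
        funext ξ; simp [Function.comp, hSO j]
      rw [this]
      exact hSRi j
    have hjensen := (hSconv.subset (Set.subset_univ C) hCconv).map_average_le
      hScont.continuousOn hCcl hfs (hORi j) hgi
    rw [average_eq, average_eq, measureReal_def, hμuniv] at hjensen
    have hSeq : (∫ ξ, S ((O j) (R j ξ)) ∂μ) = ∫ ξ in Set.Ioc (-(s j)) 0, S (R j ξ) := by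
      rw [hμ]; exact setIntegral_congr_fun measurableSet_Ioc fun ξ _ => hSO j _
    rw [hSeq, smul_eq_mul] at hjensen
    exact hjensen
  -- weights
  set lam : Fin N → ℝ := fun j => τ * (ℓ j * s j) / V with hlam
  have hcoef : ∀ j, lam j * (s j)⁻¹ = τ * ℓ j / V := by
    intro j
    simp only [hlam]
    field_simp [(hs j).ne', hV.ne']
  have hlam_nonneg : ∀ j, 0 ≤ lam j := fun j => by
    have := hℓ j; have := hs j; positivity
  have hlam_le : ∑ j, lam j ≤ 1 := by
    have hsum : ∑ j, lam j = τ * (∑ j, ℓ j * s j) / V := by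
      rw [Finset.mul_sum, Finset.sum_div]
    rw [hsum]
    have hsup : ∀ j, s j ≤ ⨆ j, s j := fun j =>
      le_ciSup (Set.Finite.bddAbove (Set.finite_range s)) j
    have h1 : (∑ j, ℓ j * s j) ≤ (⨆ j, s j) * ∑ j, ℓ j := by
      rw [Finset.mul_sum]
      refine Finset.sum_le_sum fun j _ => ?_
      rw [mul_comm ((⨆ j, s j)) (ℓ j)]
      exact mul_le_mul_of_nonneg_left (hsup j) (hℓ j).le
    calc τ * (∑ j, ℓ j * s j) / V ≤ τ * ((⨆ j, s j) * ∑ j, ℓ j) / V := by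
          rw [div_eq_mul_inv, div_eq_mul_inv]
          exact mul_le_mul_of_nonneg_right (mul_le_mul_of_nonneg_left h1 hτ.le)
            (by positivity)
      _ = τ * (⨆ j, s j) * (∑ j, ℓ j) / V := by ring
      _ ≤ 1 := hCFL
  -- the update as a convex combination
  have hOJ : ∀ j, (O j) (∫ ξ in Set.Ioc (-(s j)) 0, (R j ξ - (O j).symm qi))
      = I j - s j • qi := by
    intro j
    have hE := ((O j).toContinuousLinearEquiv).integral_comp_comm
      (μ := volume.restrict (Set.Ioc (-(s j)) 0)) (fun ξ => R j ξ - (O j).symm qi)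
    have hEcoe : ∀ x, ((O j).toContinuousLinearEquiv) x = (O j) x := fun x => rfl
    rw [← hEcoe]
    rw [← hE]
    have : (fun ξ => ((O j).toContinuousLinearEquiv) (R j ξ - (O j).symm qi))
        = fun ξ => (O j) (R j ξ) - qi := by
      funext ξ
      rw [hEcoe, map_sub, LinearEquiv.apply_symm_apply]
    rw [this, integral_sub (hORi j) (integrableOn_const (by simp [Real.volume_Ioc]))]
    rw [setIntegral_const, measureReal_def, Real.volume_Ioc, hI]
    congr 2
    rw [ENNReal.toReal_ofReal (by linarith [hs j])]
    ring
  have hq' : qi - τ • ∑ j, (ℓ j / V) •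
        (O j) (F ((O j).symm qi) - ∫ ξ in Set.Ioc (-(s j)) 0, (R j ξ - (O j).symm qi))
      = (1 - ∑ j, lam j) • qi + ∑ j, lam j • ((s j)⁻¹ • I j) := by
    have step1 : ∀ j, (O j) (F ((O j).symm qi) - ∫ ξ in Set.Ioc (-(s j)) 0,
        (R j ξ - (O j).symm qi)) = (O j) (F ((O j).symm qi)) - (I j - s j • qi) := by
      intro j; rw [map_sub, hOJ j]
    calc qi - τ • ∑ j, (ℓ j / V) •
        (O j) (F ((O j).symm qi) - ∫ ξ in Set.Ioc (-(s j)) 0, (R j ξ - (O j).symm qi))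
        = qi - τ • ∑ j, ((ℓ j / V) • (O j) (F ((O j).symm qi))
            - (ℓ j / V) • (I j - s j • qi)) := by
          congr 1
          rw [Finset.smul_sum, Finset.smul_sum]
          congr 1
          funext j
          rw [step1 j, smul_sub]
      _ = qi - τ • ((V⁻¹ • ∑ j, ℓ j • (O j) (F ((O j).symm qi)))
            - ∑ j, (ℓ j / V) • (I j - s j • qi)) := by
          have hsum : ∑ j, (ℓ j / V) • (O j) (F ((O j).symm qi))
              = V⁻¹ • ∑ j, ℓ j • (O j) (F ((O j).symm qi)) := by
            rw [Finset.smul_sum]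
            refine Finset.sum_congr rfl fun j _ => ?_
            rw [smul_smul, div_eq_inv_mul]
          rw [Finset.sum_sub_distrib, hsum]
      _ = qi + τ • ∑ j, (ℓ j / V) • (I j - s j • qi) := by
          rw [hcomp, smul_zero, zero_sub, smul_neg, sub_neg_eq_add]
      _ = qi + ∑ j, ((τ * ℓ j / V) • I j - lam j • qi) := by
          congr 1
          rw [Finset.smul_sum]
          refine Finset.sum_congr rfl fun j _ => ?_
          simp only [hlam]
          module
      _ = (1 - ∑ j, lam j) • qi + ∑ j, lam j • ((s j)⁻¹ • I j) := by
          rw [Finset.sum_sub_distrib, ← Finset.sum_smul, sub_smul, one_smul]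
          have : ∀ j, lam j • ((s j)⁻¹ • I j) = (τ * ℓ j / V) • I j := by
            intro j
            rw [smul_smul, hcoef j]
          rw [Finset.sum_congr rfl fun j _ => this j]
          abel
  rw [hq']
  -- Jensen (finite) over Option (Fin N)
  set w : Option (Fin N) → ℝ := fun o => o.elim (1 - ∑ j, lam j) lam with hw
  set p : Option (Fin N) → (Fin d → ℝ) := fun o => o.elim qi (fun j => (s j)⁻¹ • I j) with hp
  have hw0 : ∀ o ∈ Finset.univ, 0 ≤ w o := by
    rintro (_ | j) _
    · simpa [hw] using sub_nonneg.2 hlam_le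
    · exact hlam_nonneg j
  have hw1 : ∑ o, w o = 1 := by
    rw [Fintype.sum_option]
    simp [hw]
  have hjfin := hSconv.map_sum_le hw0 hw1 (fun o _ => Set.mem_univ (p o))
  rw [Fintype.sum_option, Fintype.sum_option] at hjfin
  simp only [hw, hp, Option.elim] at hjfin
  have hmain : S ((1 - ∑ j, lam j) • qi + ∑ j, lam j • ((s j)⁻¹ • I j))
      ≤ S qi + τ * ∑ j, (ℓ j / V) * A j := by
    refine hjfin.trans ?_
    have hterm : ∀ j, lam j • S ((s j)⁻¹ • I j)
        ≤ (τ * ℓ j / V) * (∫ ξ in Set.Ioc (-(s j)) 0, S (R j ξ)) := by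
      intro j
      have h1 : lam j • S ((s j)⁻¹ • I j)
          ≤ lam j * ((s j)⁻¹ * ∫ ξ in Set.Ioc (-(s j)) 0, S (R j ξ)) := by
        rw [smul_eq_mul]
        exact mul_le_mul_of_nonneg_left (hkey j) (hlam_nonneg j)
      refine h1.trans_eq ?_
      rw [← mul_assoc, hcoef j]
    calc (1 - ∑ j, lam j) • S qi + ∑ j, lam j • S ((s j)⁻¹ • I j)
        ≤ (1 - ∑ j, lam j) • S qi
          + ∑ j, (τ * ℓ j / V) * (∫ ξ in Set.Ioc (-(s j)) 0, S (R j ξ)) := by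
          gcongr with j _
          exact hterm j
      _ = S qi + τ * ∑ j, (ℓ j / V) * A j := by
          rw [smul_eq_mul, Finset.mul_sum]
          rw [Finset.sum_congr rfl (fun j (_ : j ∈ Finset.univ) => by
            rw [hAeq j] : ∀ j ∈ Finset.univ,
              τ * ((ℓ j / V) * A j)
                = τ * ((ℓ j / V) * ((∫ ξ in Set.Ioc (-(s j)) 0, S (R j ξ)) - s j * S qi)))]
          rw [hlam]
          have : ∑ j, τ * ((ℓ j / V) * ((∫ ξ in Set.Ioc (-(s j)) 0, S (R j ξ)) - s j * S qi))
              = ∑ j, ((τ * ℓ j / V) * (∫ ξ in Set.Ioc (-(s j)) 0, S (R j ξ))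
                  - (τ * (ℓ j * s j) / V) * S qi) := by
            refine Finset.sum_congr rfl fun j _ => ?_
            ring
          rw [this, Finset.sum_sub_distrib, ← Finset.sum_mul]
          ring
  refine hmain.trans ?_
  -- now compare with the entropy flux bound
  have hbound : ∑ j, (ℓ j / V) * Gt j ≤ - ∑ j, (ℓ j / V) * A j := by
    have h1 : ∑ j, (ℓ j / V) * Gt j ≤ ∑ j, (ℓ j / V) * (g j - A j) := by
      refine Finset.sum_le_sum fun j _ => ?_
      refine mul_le_mul_of_nonneg_left ?_ (div_nonneg (hℓ j).le hV.le)
      have := hGt j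
      rwa [hIic j] at this
    have h2 : ∑ j, (ℓ j / V) * (g j - A j)
        = (∑ j, ℓ j * g j) / V - ∑ j, (ℓ j / V) * A j := by
      rw [Finset.sum_div, ← Finset.sum_sub_distrib]
      refine Finset.sum_congr rfl fun j _ => ?_
      ring
    rw [h2, hg] at h1
    simpa using h1
  have h3 : τ * ∑ j, (ℓ j / V) * Gt j ≤ τ * (- ∑ j, (ℓ j / V) * A j) :=
    mul_le_mul_of_nonneg_left hbound hτ.le
  linarith
end

section
/- Let g, G, H, U, V, B_xx, B_yy, B_xy, B_zz be real numbers with H ≠ 0, and let J be the 7×7 real matrix, in the ordered variables (H, U, V, B_xx, B_yy, B_xy, B_zz), with rows: (U, H, 0, 0, 0, 0, 0); (g − G(B_xx − B_zz)/H, U, 0, −G, 0, 0, G); (−G·B_xy/H, 0, U, 0, 0, −G, 0); (0, −2B_xx, 0, U, 0, 0, 0); (0, 0, −2B_xy, 0, U, 0, 0); (0, −B_xy, −B_xx, 0, 0, U, 0); (0, 2B_zz, 0, 0, 0, 0, U). Then the characteristic polynomial of J is (X − U)³ · ( (X − U)² − G·B_xx ) · ( (X − U)² − (g·H + G·B_xx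 + 3·G·B_zz) ). -/
open Polynomial

set_option maxHeartbeats 1000000 in
/-- The characteristic polynomial of the Jacobian matrix `J`
of the one-dimensional projection of the Saint-Venant system for
Upper-Convected Maxwell fluids, in the variables
`(H, U, V, B_xx, B_yy, B_xy, B_zz)`, is
`(X − U)³ ((X − U)² − G·B_xx) ((X − U)² − (g·H + G·B_xx + 3·G·B_zz))`. -/
theorem svucm_jacobian_charpoly (g G H U V Bxx Byy Bxy Bzz : ℝ) (hH : H ≠ 0) :
    (Matrix.of
      ![![U, H, 0, 0, 0, 0, 0],
        ![g - G * (Bxx - Bzz) / H, U, 0, -G, 0, 0, G],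
        ![-(G * Bxy) / H, 0, U, 0, 0, -G, 0],
        ![0, -(2 * Bxx), 0, U, 0, 0, 0],
        ![0, 0, -(2 * Bxy), 0, U, 0, 0],
        ![0, -Bxy, -Bxx, 0, 0, U, 0],
        ![0, 2 * Bzz, 0, 0, 0, 0, U]] : Matrix (Fin 7) (Fin 7) ℝ).charpoly
      = (X - C U) ^ 3 * ((X - C U) ^ 2 - C (G * Bxx))
          * ((X - C U) ^ 2 - C (g * H + G * Bxx + 3 * G * Bzz)) := by
  have ha' : H * (G * (Bxx - Bzz) / H) = G * (Bxx - Bzz) := by field_simp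
  have ha := congrArg (C : ℝ →+* ℝ[X]) ha'
  rw [C_mul, C_mul, C_sub] at ha
  set M : Matrix (Fin 7) (Fin 7) ℝ := Matrix.of
      ![![U, H, 0, 0, 0, 0, 0],
        ![g - G * (Bxx - Bzz) / H, U, 0, -G, 0, 0, G],
        ![-(G * Bxy) / H, 0, U, 0, 0, -G, 0],
        ![0, -(2 * Bxx), 0, U, 0, 0, 0],
        ![0, 0, -(2 * Bxy), 0, U, 0, 0],
        ![0, -Bxy, -Bxx, 0, 0, U, 0],
        ![0, 2 * Bzz, 0, 0, 0, 0, U]] with hM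
  set e : Fin 7 ≃ (Fin 4 ⊕ Fin 3) := (finSumFinEquiv.trans
    ⟨![0, 1, 3, 6, 2, 5, 4], ![0, 1, 4, 2, 6, 5, 3], by decide, by decide⟩).symm with he
  rw [← Matrix.charpoly_reindex e M]
  have hblock : Matrix.reindex e e M = Matrix.fromBlocks
      (!![U, H, 0, 0;
          g - G * (Bxx - Bzz) / H, U, -G, G;
          0, -(2 * Bxx), U, 0;
          0, 2 * Bzz, 0, U]) 0
      (!![-(G * Bxy) / H, 0, 0, 0;
          0, -Bxy, 0, 0;
          0, 0, 0, 0])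
      (!![U, -G, 0;
          -Bxx, U, 0;
          -(2 * Bxy), 0, U]) := by
    ext i j
    rcases i with i | i <;> rcases j with j | j <;> fin_cases i <;> fin_cases j <;> rfl
  rw [hblock, Matrix.charpoly_fromBlocks_zero₁₂]
  have hA : (!![U, H, 0, 0;
          g - G * (Bxx - Bzz) / H, U, -G, G;
          0, -(2 * Bxx), U, 0;
          0, 2 * Bzz, 0, U]).charpoly
      = (X - C U) ^ 2 * ((X - C U) ^ 2 - C (g * H + G * Bxx + 3 * G * Bzz)) := by
    have hcm : Matrix.charmatrix (!![U, H, 0, 0;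
          g - G * (Bxx - Bzz) / H, U, -G, G;
          0, -(2 * Bxx), U, 0;
          0, 2 * Bzz, 0, U])
        = !![X - C U, -C H, 0, 0;
             -(C g - C (G * (Bxx - Bzz) / H)), X - C U, C G, -C G;
             0, C (2 * Bxx), X - C U, 0;
             0, -C (2 * Bzz), 0, X - C U] := by
      ext i j : 2
      fin_cases i <;> fin_cases j <;> simp [Matrix.charmatrix_apply, Matrix.vecHead, Matrix.vecTail]
    rw [Matrix.charpoly, hcm]
    simp [Matrix.det_succ_row_zero, Fin.sum_univ_succ, Fin.succAbove,
      C_mul, C_add, map_ofNat]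
    linear_combination (X - C U) ^ 2 * ha
  have hD : (!![U, -G, 0;
          -Bxx, U, 0;
          -(2 * Bxy), 0, U]).charpoly
      = (X - C U) * ((X - C U) ^ 2 - C (G * Bxx)) := by
    have hcm : Matrix.charmatrix (!![U, -G, 0;
          -Bxx, U, 0;
          -(2 * Bxy), 0, U])
        = !![X - C U, C G, 0;
             C Bxx, X - C U, 0;
             C (2 * Bxy), 0, X - C U] := by
      ext i j : 2
      fin_cases i <;> fin_cases j <;> simp [Matrix.charmatrix_apply, Matrix.vecHead, Matrix.vecTail]
    rw [Matrix.charpoly, hcm, Matrix.det_fin_three]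
    simp [C_mul]
    ring
  rw [hA, hD]
  ring
end

section
/- Let g > 0, G > 0, H > 0, B_xx > 0, B_zz > 0 and U, V, B_yy, B_xy ∈ ℝ, and let J be the 7×7 real matrix with rows (U, H, 0, 0, 0, 0, 0); (g − G(B_xx − B_zz)/H, U, 0, −G, 0, 0, G); (−G·B_xy/H, 0, U, 0, 0, −G, 0); (0, −2B_xx, 0, U, 0, 0, 0); (0, 0, −2B_xy, 0, U, 0, 0); (0, −B_xy, −B_xx, 0, 0, U, 0); (0, 2B_zz, 0, 0, 0, 0, U). Then J is diagonalizable over ℝ, its eigenvalues being U (with algebraic and geometric multiplicity 3), U ± √(G·B_xx) (each simple) and U ± √(g·H + G·B_xx + 3·G·B_zz) (each simple). -/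
set_option maxHeartbeats 2000000

/-- hyperbolicity of 1D SVUCM.  Under the positivity
constraints `g, G, H, B_xx, B_zz > 0`, the Jacobian matrix `J` of the
one-dimensional SVUCM system is diagonalizable over ℝ: there is an invertible
matrix `P` with `J = P · diag(U, U, U, U ± √(G·B_xx), U ± √(g·H + G·B_xx + 3·G·B_zz)) · P⁻¹`,
so the eigenvalues are `U` (with algebraic and geometric multiplicity 3),
`U ± √(G·B_xx)` and `U ± √(g·H + G·B_xx + 3·G·B_zz)` (each simple). -/
theorem svucm_jacobian_diagonalizable (g G H U V Bxx Byy Bxy Bzz : ℝ)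
    (hg : 0 < g) (hG : 0 < G) (hH : 0 < H) (hBxx : 0 < Bxx) (hBzz : 0 < Bzz) :
    ∃ P : Matrix (Fin 7) (Fin 7) ℝ, IsUnit P ∧
      (Matrix.of
        ![![U, H, 0, 0, 0, 0, 0],
          ![g - G * (Bxx - Bzz) / H, U, 0, -G, 0, 0, G],
          ![-(G * Bxy) / H, 0, U, 0, 0, -G, 0],
          ![0, -(2 * Bxx), 0, U, 0, 0, 0],
          ![0, 0, -(2 * Bxy), 0, U, 0, 0],
          ![0, -Bxy, -Bxx, 0, 0, U, 0],
          ![0, 2 * Bzz, 0, 0, 0, 0, U]] : Matrix (Fin 7) (Fin 7) ℝ)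
        = P * Matrix.diagonal
            ![U, U, U,
              U + Real.sqrt (G * Bxx), U - Real.sqrt (G * Bxx),
              U + Real.sqrt (g * H + G * Bxx + 3 * G * Bzz),
              U - Real.sqrt (g * H + G * Bxx + 3 * G * Bzz)] * P⁻¹ := by
  set a : ℝ := Real.sqrt (G * Bxx) with ha_def
  set b : ℝ := Real.sqrt (g * H + G * Bxx + 3 * G * Bzz) with hb_def
  have hGB : (0:ℝ) < G * Bxx := mul_pos hG hBxx
  have hS : (0:ℝ) < g * H + G * Bxx + 3 * G * Bzz := by positivity
  have ha0 : a ≠ 0 := (Real.sqrt_pos.mpr hGB).ne'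
  have hb0 : b ≠ 0 := (Real.sqrt_pos.mpr hS).ne'
  have ha : a * a = G * Bxx := Real.mul_self_sqrt hGB.le
  have hb : b * b = g * H + G * Bxx + 3 * G * Bzz := Real.mul_self_sqrt hS.le
  clear ha_def hb_def
  clear_value a b
  have hH0 : H ≠ 0 := hH.ne'
  have hG0 : G ≠ 0 := hG.ne'
  have hBxx0 : Bxx ≠ 0 := hBxx.ne'
  have hS0 : g * H + G * Bxx + 3 * G * Bzz ≠ 0 := hS.ne'
  set P : Matrix (Fin 7) (Fin 7) ℝ := Matrix.of
    ![![0, 0, G * H, 0, 0, H, H],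
      ![0, 0, 0, 0, 0, b, -b],
      ![0, 0, 0, a, -a, 0, 0],
      ![1, 0, g * H - G * (Bxx - Bzz), 0, 0, -(2 * Bxx), -(2 * Bxx)],
      ![0, 1, 0, -(2 * Bxy), -(2 * Bxy), 0, 0],
      ![0, 0, -(G * Bxy), -Bxx, -Bxx, -Bxy, -Bxy],
      ![1, 0, 0, 0, 0, 2 * Bzz, 2 * Bzz]] with hP_def
  set Q : Matrix (Fin 7) (Fin 7) ℝ := Matrix.of
    ![![-(2 * Bzz * (g * H - G * (Bxx - Bzz))) / (H * (g * H + G * Bxx + 3 * G * Bzz)), 0, 0,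
        2 * G * Bzz / (g * H + G * Bxx + 3 * G * Bzz), 0, 0,
        1 - 2 * G * Bzz / (g * H + G * Bxx + 3 * G * Bzz)],
      ![-(2 * Bxy ^ 2) / (H * Bxx), 0, 0, 0, 1, -(2 * Bxy) / Bxx, 0],
      ![2 * (Bxx + Bzz) / (H * (g * H + G * Bxx + 3 * G * Bzz)), 0, 0,
        1 / (g * H + G * Bxx + 3 * G * Bzz), 0, 0,
        -(1 / (g * H + G * Bxx + 3 * G * Bzz))],
      ![-Bxy / (2 * Bxx * H), 0, 1 / (2 * a), 0, 0, -(1 / (2 * Bxx)), 0],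
      ![-Bxy / (2 * Bxx * H), 0, -(1 / (2 * a)), 0, 0, -(1 / (2 * Bxx)), 0],
      ![(g * H - G * (Bxx - Bzz)) / (2 * H * (g * H + G * Bxx + 3 * G * Bzz)), 1 / (2 * b), 0,
        -(G / (2 * (g * H + G * Bxx + 3 * G * Bzz))), 0, 0,
        G / (2 * (g * H + G * Bxx + 3 * G * Bzz))],
      ![(g * H - G * (Bxx - Bzz)) / (2 * H * (g * H + G * Bxx + 3 * G * Bzz)), -(1 / (2 * b)), 0,
        -(G / (2 * (g * H + G * Bxx + 3 * G * Bzz))), 0, 0,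
        G / (2 * (g * H + G * Bxx + 3 * G * Bzz))]] with hQ_def
  have e1 : (5 : Fin 7) = (4 : Fin 6).succ := rfl
  have e2 : (6 : Fin 7) = (5 : Fin 6).succ := rfl
  have e3 : (5 : Fin 6) = (4 : Fin 5).succ := rfl
  have hPQ : P * Q = 1 := by
    ext i j
    fin_cases i <;> fin_cases j <;>
      simp [hP_def, hQ_def, Matrix.mul_apply, Matrix.one_apply, Fin.sum_univ_succ, e1, e2, e3, Matrix.cons_val_succ] <;>
      (try field_simp) <;> ring
  have hPu : IsUnit P := (Matrix.isUnit_iff_isUnit_det P).mpr (Matrix.isUnit_det_of_right_inverse hPQ)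
  have hPinv : P⁻¹ = Q := Matrix.inv_eq_right_inv hPQ
  refine ⟨P, hPu, ?_⟩
  have hJP :
      (Matrix.of
        ![![U, H, 0, 0, 0, 0, 0],
          ![g - G * (Bxx - Bzz) / H, U, 0, -G, 0, 0, G],
          ![-(G * Bxy) / H, 0, U, 0, 0, -G, 0],
          ![0, -(2 * Bxx), 0, U, 0, 0, 0],
          ![0, 0, -(2 * Bxy), 0, U, 0, 0],
          ![0, -Bxy, -Bxx, 0, 0, U, 0],
          ![0, 2 * Bzz, 0, 0, 0, 0, U]] : Matrix (Fin 7) (Fin 7) ℝ) * P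
      = P * Matrix.diagonal ![U, U, U, U + a, U - a, U + b, U - b] := by
    ext i j
    fin_cases i <;> fin_cases j <;>
      simp [hP_def, Matrix.mul_apply, Matrix.diagonal, Fin.sum_univ_succ, e1, e2, e3, Matrix.cons_val_succ] <;>
      (try field_simp) <;>
      first
        | ring1
        | linear_combination ha
        | linear_combination hb
        | linear_combination (-1 : ℝ) * ha
        | linear_combination (-1 : ℝ) * hb
        | linear_combination H * ha
        | linear_combination H * hb
        | linear_combination (-H) * ha
        | linear_combination (-H) * hb
        | linear_combination a * ha
        | linear_combination b * hb
        | linear_combination (-a) * ha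
        | linear_combination (-b) * hb
  rw [← hJP, Matrix.mul_assoc,
    Matrix.mul_nonsing_inv P ((Matrix.isUnit_iff_isUnit_det P).mp hPu), Matrix.mul_one]
end

section
/- Let Ω ⊆ ℝ_t × ℝ_x be open and let H > 0, F^∥_e, F^⊥_e, F^⊥_f, U^∥, U^⊥, Π^∥_e, Π^⊥_e, 𝒱, 𝒵, c > 0, E : Ω → ℝ be C¹ functions satisfying (with δ ranging over {∥, ⊥} and F^∥_f ≡ 0): ∂_t H + ∂_x(H U^∥) = 0; ∂_t(H F^δ_e) + ∂_x(H U^∥ F^δ_e − E U^δ) = 0; ∂_t(H F^⊥_f) + ∂_x(H U^∥ F^⊥_f) = 0; ∂_t(H U^δ) + ∂_x(H U^∥ U^δ + E Π^δ_e) = 0; ∂_t(H Π^δ_e / c²) + ∂_x(H U^∥ Π^δ_e / c² + E U^δ) = 0; ∂_t(H 𝒱) + ∂_x(H U^∥ 𝒱 + E 𝒵) = 0; ∂_t(H 𝒵 / c²) + ∂_x(H U^∥ 𝒵 / c² + E 𝒱) = 0; ∂_t(H c²) + ∂_x(H U^∥ c²) = 0; ∂_t(H E) + ∂_x(H U^∥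 E) = 0; together with the pointwise constraints E · F^⊥_f = 1 and 𝒱 = U^∥ · F^⊥_f on Ω. Then each of the quantities c², E, F^⊥_f, F^∥_e + Π^∥_e / c², F^⊥_e + Π^⊥_e / c², and H⁻¹ + 𝒵 / c² is transported at velocity U^∥, i.e. satisfies ∂_t w + U^∥ ∂_x w = 0 on Ω. -/
/-!
Subtracting `w` times the mass equation from a conservation law
`∂_t (H w) + ∂_x (H U w + G) = 0` leaves `H (∂_t w + U ∂_x w) + ∂_x G = 0`. The exchange fluxes
`∓ E U^δ` of the `F^δ_e` and `Π^δ_e / c²` equations cancel in the sum. For the volume, the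
constraints give `E 𝒱 = U^∥`, and by mass conservation `∂_x U^∥ / H` is the material derivative
of `H⁻¹`.
-/

/-- Partial derivative `∂_t f` of a field on `ℝ_t × ℝ_x`. -/
noncomputable def dt (f : ℝ × ℝ → ℝ) (x : ℝ × ℝ) : ℝ := fderiv ℝ f x (1, 0)

/-- Partial derivative `∂_x f` of a field on `ℝ_t × ℝ_x`. -/
noncomputable def dx (f : ℝ × ℝ → ℝ) (x : ℝ × ℝ) : ℝ := fderiv ℝ f x (0, 1)

open Topology

section FDerivApply

variable {E : Type*} [NormedAddCommGroup E] [NormedSpace ℝ E] {f g : E → ℝ} {x v : E}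

theorem fderiv_fun_add_apply (hf : DifferentiableAt ℝ f x) (hg : DifferentiableAt ℝ g x) :
    fderiv ℝ (fun y => f y + g y) x v = fderiv ℝ f x v + fderiv ℝ g x v := by
  rw [fderiv_fun_add hf hg, add_apply]

theorem fderiv_fun_sub_apply (hf : DifferentiableAt ℝ f x) (hg : DifferentiableAt ℝ g x) :
    fderiv ℝ (fun y => f y - g y) x v = fderiv ℝ f x v - fderiv ℝ g x v := by
  rw [fderiv_fun_sub hf hg, sub_apply]

theorem fderiv_fun_mul_apply (hf : DifferentiableAt ℝ f x) (hg : DifferentiableAt ℝ g x) :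
    fderiv ℝ (fun y => f y * g y) x v = fderiv ℝ f x v * g x + f x * fderiv ℝ g x v := by
  rw [fderiv_fun_mul hf hg]
  simp only [add_apply, smul_apply, smul_eq_mul]
  ring

theorem fderiv_fun_inv_apply (hf : DifferentiableAt ℝ f x) (hf0 : f x ≠ 0) :
    fderiv ℝ (fun y => (f y)⁻¹) x v = -fderiv ℝ f x v / f x ^ 2 := by
  rw [show (fun y => (f y)⁻¹) = (fun t : ℝ => t⁻¹) ∘ f from rfl,
    fderiv_comp x (differentiableAt_inv hf0) hf, fderiv_inv]
  simp [div_eq_mul_inv, mul_comm]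

end FDerivApply

noncomputable def materialDeriv (U w : ℝ × ℝ → ℝ) (x : ℝ × ℝ) : ℝ := dt w x + U x * dx w x

section Transport

variable {H U w w₁ w₂ G : ℝ × ℝ → ℝ} {x : ℝ × ℝ}

theorem materialDeriv_add (hw₁ : DifferentiableAt ℝ w₁ x) (hw₂ : DifferentiableAt ℝ w₂ x) :
    materialDeriv U (fun y => w₁ y + w₂ y) x = materialDeriv U w₁ x + materialDeriv U w₂ x := by
  simp only [materialDeriv, dt, dx, fderiv_fun_add_apply hw₁ hw₂]
  ring

theorem conservative_eq_mul_materialDeriv (hH : DifferentiableAt ℝ H x)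
    (hU : DifferentiableAt ℝ U x) (hw : DifferentiableAt ℝ w x)
    (hmass : dt H x + dx (fun y => H y * U y) x = 0) :
    dt (fun y => H y * w y) x + dx (fun y => H y * U y * w y) x = H x * materialDeriv U w x := by
  simp only [dt, dx, materialDeriv] at hmass ⊢
  rw [fderiv_fun_mul_apply hH hU] at hmass
  rw [fderiv_fun_mul_apply hH hw, fderiv_fun_mul_apply (hH.fun_mul hU) hw,
    fderiv_fun_mul_apply hH hU]
  linear_combination w x * hmass

theorem materialDeriv_inv (hH : DifferentiableAt ℝ H x) (hU : DifferentiableAt ℝ U x)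
    (hH0 : H x ≠ 0) (hmass : dt H x + dx (fun y => H y * U y) x = 0) :
    materialDeriv U (fun y => (H y)⁻¹) x = dx U x / H x := by
  simp only [dt, dx, materialDeriv] at hmass ⊢
  rw [fderiv_fun_mul_apply hH hU] at hmass
  rw [fderiv_fun_inv_apply hH hH0, fderiv_fun_inv_apply hH hH0]
  field_simp
  linear_combination -hmass

variable (hH : DifferentiableAt ℝ H x) (hU : DifferentiableAt ℝ U x) (hH0 : H x ≠ 0)
  (hmass : dt H x + dx (fun y => H y * U y) x = 0)
include hH hU hH0 hmass

theorem materialDeriv_eq_zero_of_conservation (hw : DifferentiableAt ℝ w x)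
    (hw_cons : dt (fun y => H y * w y) x + dx (fun y => H y * U y * w y) x = 0) :
    materialDeriv U w x = 0 := by
  rw [conservative_eq_mul_materialDeriv hH hU hw hmass] at hw_cons
  exact (mul_eq_zero.mp hw_cons).resolve_left hH0

theorem materialDeriv_add_eq_zero_of_exchange (hw₁ : DifferentiableAt ℝ w₁ x)
    (hw₂ : DifferentiableAt ℝ w₂ x) (hG : DifferentiableAt ℝ G x)
    (hw₁_cons : dt (fun y => H y * w₁ y) x + dx (fun y => H y * U y * w₁ y - G y) x = 0)
    (hw₂_cons : dt (fun y => H y * w₂ y) x + dx (fun y => H y * U y * w₂ y + G y) x = 0) :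
    materialDeriv U (fun y => w₁ y + w₂ y) x = 0 := by
  have e₁ := conservative_eq_mul_materialDeriv hH hU hw₁ hmass
  have e₂ := conservative_eq_mul_materialDeriv hH hU hw₂ hmass
  simp only [dx] at hw₁_cons hw₂_cons e₁ e₂
  rw [fderiv_fun_sub_apply ((hH.fun_mul hU).fun_mul hw₁) hG] at hw₁_cons
  rw [fderiv_fun_add_apply ((hH.fun_mul hU).fun_mul hw₂) hG] at hw₂_cons
  have hsum : H x * (materialDeriv U w₁ x + materialDeriv U w₂ x) = 0 := by
    linear_combination hw₁_cons + hw₂_cons - e₁ - e₂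
  rw [materialDeriv_add hw₁ hw₂]
  exact (mul_eq_zero.mp hsum).resolve_left hH0

theorem materialDeriv_inv_add_eq_zero (hw : DifferentiableAt ℝ w x)
    (hG : DifferentiableAt ℝ G x) (hGU : G =ᶠ[𝓝 x] U)
    (hw_cons : dt (fun y => H y * w y) x + dx (fun y => H y * U y * w y + G y) x = 0) :
    materialDeriv U (fun y => (H y)⁻¹ + w y) x = 0 := by
  have e := conservative_eq_mul_materialDeriv hH hU hw hmass
  simp only [dx] at hw_cons e
  rw [fderiv_fun_add_apply ((hH.fun_mul hU).fun_mul hw) hG, hGU.fderiv_eq] at hw_cons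
  rw [materialDeriv_add (hH.fun_inv hH0) hw, materialDeriv_inv hH hU hH0 hmass, dx]
  field_simp
  linear_combination hw_cons - e

end Transport

theorem svm_relaxed_solver_riemann_invariants_general (Ω : Set (ℝ × ℝ)) (hΩ : IsOpen Ω)
    (H Ff V Z c E : ℝ × ℝ → ℝ)
    (Fe Uv Pi' : Fin 2 → ℝ × ℝ → ℝ)
    (hHpos : ∀ x ∈ Ω, 0 < H x) (hcpos : ∀ x ∈ Ω, 0 < c x)
    (hreg : ∀ x ∈ Ω, DifferentiableAt ℝ H x ∧ DifferentiableAt ℝ Ff x ∧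
      DifferentiableAt ℝ V x ∧ DifferentiableAt ℝ Z x ∧ DifferentiableAt ℝ c x ∧
      DifferentiableAt ℝ E x ∧
      (∀ δ, DifferentiableAt ℝ (Fe δ) x ∧ DifferentiableAt ℝ (Uv δ) x ∧
        DifferentiableAt ℝ (Pi' δ) x))
    (h1 : ∀ x ∈ Ω, dt H x + dx (fun y => H y * Uv 0 y) x = 0)
    (h2 : ∀ δ, ∀ x ∈ Ω, dt (fun y => H y * Fe δ y) x
      + dx (fun y => H y * Uv 0 y * Fe δ y - E y * Uv δ y) x = 0)
    (h3 : ∀ x ∈ Ω, dt (fun y => H y * Ff y) x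
      + dx (fun y => H y * Uv 0 y * Ff y) x = 0)
    (h5 : ∀ δ, ∀ x ∈ Ω, dt (fun y => H y * Pi' δ y / (c y) ^ 2) x
      + dx (fun y => H y * Uv 0 y * Pi' δ y / (c y) ^ 2 + E y * Uv δ y) x = 0)
    (h7 : ∀ x ∈ Ω, dt (fun y => H y * Z y / (c y) ^ 2) x
      + dx (fun y => H y * Uv 0 y * Z y / (c y) ^ 2 + E y * V y) x = 0)
    (h8 : ∀ x ∈ Ω, dt (fun y => H y * (c y) ^ 2) x
      + dx (fun y => H y * Uv 0 y * (c y) ^ 2) x = 0)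
    (h9 : ∀ x ∈ Ω, dt (fun y => H y * E y) x
      + dx (fun y => H y * Uv 0 y * E y) x = 0)
    (hcon1 : ∀ x ∈ Ω, E x * Ff x = 1)
    (hcon2 : ∀ x ∈ Ω, V x = Uv 0 x * Ff x) :
    (∀ x ∈ Ω, dt (fun y => (c y) ^ 2) x + Uv 0 x * dx (fun y => (c y) ^ 2) x = 0) ∧
    (∀ x ∈ Ω, dt E x + Uv 0 x * dx E x = 0) ∧
    (∀ x ∈ Ω, dt Ff x + Uv 0 x * dx Ff x = 0) ∧
    (∀ δ, ∀ x ∈ Ω, dt (fun y => Fe δ y + Pi' δ y / (c y) ^ 2) x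
      + Uv 0 x * dx (fun y => Fe δ y + Pi' δ y / (c y) ^ 2) x = 0) ∧
    (∀ x ∈ Ω, dt (fun y => (H y)⁻¹ + Z y / (c y) ^ 2) x
      + Uv 0 x * dx (fun y => (H y)⁻¹ + Z y / (c y) ^ 2) x = 0) := by
  refine ⟨fun x hx => ?_, fun x hx => ?_, fun x hx => ?_, fun δ x hx => ?_, fun x hx => ?_⟩ <;>
    obtain ⟨dH, dFf, dV, dZ, dc, dE, dδ⟩ := hreg x hx <;>
    have hH0 := (hHpos x hx).ne' <;>
    -- `a / c ^ 2` unfolds to `a * (c ^ 2)⁻¹`, so `dc2` gives the differentiability of `Π / c²`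
    have dc2 : DifferentiableAt ℝ (fun y => (c y ^ 2)⁻¹) x :=
      (dc.fun_pow 2).fun_inv (pow_ne_zero 2 (hcpos x hx).ne')
  · exact materialDeriv_eq_zero_of_conservation dH (dδ 0).2.1 hH0 (h1 x hx)
      (dc.fun_pow 2) (h8 x hx)
  · exact materialDeriv_eq_zero_of_conservation dH (dδ 0).2.1 hH0 (h1 x hx) dE (h9 x hx)
  · exact materialDeriv_eq_zero_of_conservation dH (dδ 0).2.1 hH0 (h1 x hx) dFf (h3 x hx)
  · obtain ⟨dFe, dUδ, dPi⟩ := dδ δ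
    have h5' := h5 δ x hx
    simp only [mul_div_assoc] at h5'
    exact materialDeriv_add_eq_zero_of_exchange dH (dδ 0).2.1 hH0 (h1 x hx)
      dFe (dPi.fun_mul dc2) (dE.fun_mul dUδ) (h2 δ x hx) h5'
  · have hEV : (fun y => E y * V y) =ᶠ[𝓝 x] Uv 0 := by
      filter_upwards [hΩ.mem_nhds hx] with y hy
      rw [hcon2 y hy]
      linear_combination Uv 0 y * hcon1 y hy
    have h7' := h7 x hx
    simp only [mul_div_assoc] at h7'
    exact materialDeriv_inv_add_eq_zero dH (dδ 0).2.1 hH0 (h1 x hx)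
      (dZ.fun_mul dc2) (dE.fun_mul dV) hEV h7'

/-- Riemann invariants of the relaxed 1D solver in Eulerian
coordinates.  On an open set `Ω ⊆ ℝ_t × ℝ_x`, given C¹ fields
`H > 0, F^δ_e, F^⊥_f, U^δ, Π^δ_e, 𝒱, 𝒵, c > 0, E` (δ ∈ {∥, ⊥} indexed by
`Fin 2`, with `δ = 0` the ∥ component and `F^∥_f ≡ 0`) satisfying the nine
relaxed conservation laws and the pointwise constraints `E·F^⊥_f = 1` and
`𝒱 = U^∥·F^⊥_f`, each of `c²`, `E`, `F^⊥_f`, `F^δ_e + Π^δ_e/c²` and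
`H⁻¹ + 𝒵/c²` is transported at velocity `U^∥`. -/
theorem svm_relaxed_solver_riemann_invariants (Ω : Set (ℝ × ℝ)) (hΩ : IsOpen Ω)
    (H Ff V Z c E : ℝ × ℝ → ℝ)
    (Fe Uv Pi' : Fin 2 → ℝ × ℝ → ℝ)
    (hHpos : ∀ x ∈ Ω, 0 < H x) (hcpos : ∀ x ∈ Ω, 0 < c x)
    (hreg : ∀ x ∈ Ω, DifferentiableAt ℝ H x ∧ DifferentiableAt ℝ Ff x ∧
      DifferentiableAt ℝ V x ∧ DifferentiableAt ℝ Z x ∧ DifferentiableAt ℝ c x ∧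
      DifferentiableAt ℝ E x ∧
      (∀ δ, DifferentiableAt ℝ (Fe δ) x ∧ DifferentiableAt ℝ (Uv δ) x ∧
        DifferentiableAt ℝ (Pi' δ) x))
    (h1 : ∀ x ∈ Ω, dt H x + dx (fun y => H y * Uv 0 y) x = 0)
    (h2 : ∀ δ, ∀ x ∈ Ω, dt (fun y => H y * Fe δ y) x
      + dx (fun y => H y * Uv 0 y * Fe δ y - E y * Uv δ y) x = 0)
    (h3 : ∀ x ∈ Ω, dt (fun y => H y * Ff y) x
      + dx (fun y => H y * Uv 0 y * Ff y) x = 0)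
    (h4 : ∀ δ, ∀ x ∈ Ω, dt (fun y => H y * Uv δ y) x
      + dx (fun y => H y * Uv 0 y * Uv δ y + E y * Pi' δ y) x = 0)
    (h5 : ∀ δ, ∀ x ∈ Ω, dt (fun y => H y * Pi' δ y / (c y) ^ 2) x
      + dx (fun y => H y * Uv 0 y * Pi' δ y / (c y) ^ 2 + E y * Uv δ y) x = 0)
    (h6 : ∀ x ∈ Ω, dt (fun y => H y * V y) x
      + dx (fun y => H y * Uv 0 y * V y + E y * Z y) x = 0)
    (h7 : ∀ x ∈ Ω, dt (fun y => H y * Z y / (c y) ^ 2) x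
      + dx (fun y => H y * Uv 0 y * Z y / (c y) ^ 2 + E y * V y) x = 0)
    (h8 : ∀ x ∈ Ω, dt (fun y => H y * (c y) ^ 2) x
      + dx (fun y => H y * Uv 0 y * (c y) ^ 2) x = 0)
    (h9 : ∀ x ∈ Ω, dt (fun y => H y * E y) x
      + dx (fun y => H y * Uv 0 y * E y) x = 0)
    (hcon1 : ∀ x ∈ Ω, E x * Ff x = 1)
    (hcon2 : ∀ x ∈ Ω, V x = Uv 0 x * Ff x) :
    (∀ x ∈ Ω, dt (fun y => (c y) ^ 2) x + Uv 0 x * dx (fun y => (c y) ^ 2) x = 0) ∧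
    (∀ x ∈ Ω, dt E x + Uv 0 x * dx E x = 0) ∧
    (∀ x ∈ Ω, dt Ff x + Uv 0 x * dx Ff x = 0) ∧
    (∀ δ, ∀ x ∈ Ω, dt (fun y => Fe δ y + Pi' δ y / (c y) ^ 2) x
      + Uv 0 x * dx (fun y => Fe δ y + Pi' δ y / (c y) ^ 2) x = 0) ∧
    (∀ x ∈ Ω, dt (fun y => (H y)⁻¹ + Z y / (c y) ^ 2) x
      + Uv 0 x * dx (fun y => (H y)⁻¹ + Z y / (c y) ^ 2) x = 0) :=
  svm_relaxed_solver_riemann_invariants_general Ω hΩ H Ff V Z c E Fe Uv Pi' hHpos hcpos hreg h1 h2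
    h3 h5 h7 h8 h9 hcon1 hcon2
end

section
/- Let g > 0, G > 0, let A_{aa}, A_{ab}, A_{bb} be the entries of a constant symmetric positive-definite 2×2 matrix, let A_cc > 0 and F^x_b, F^y_b be constants, and let H > 0, F^x_a, F^y_a, U^x, U^y : Ω → ℝ be C¹ functions on an open set Ω ⊆ ℝ_t × ℝ_a satisfying the one-dimensional Lagrangian Saint-Venant–Maxwell system: ∂_t(H⁻¹) − ∂_a( U^x F^y_b − U^y F^x_b ) = 0; ∂_t F^i_a − ∂_a U^i = 0 for i ∈ {x, y}; and ∂_t U^i + ∂_a 𝒫^i_a = 0 for i ∈ {x, y}, where 𝒫 := g H²/2 + G H³ A_cc, 𝒫^x_a := 𝒫 F^y_b − G( F^x_a A_{aa} + F^x_b A_{ab} ), and 𝒫^y_a := −𝒫 F^x_b − G( F^y_a A_{aa} + F^y_b A_{ab} ). Then the free energy E := ( (U^x)² + (U^y)² )/2 + g H / 2 + (G/2)·( Σ_{i∈{x,y}} ( (F^i_a)² A_{aa} + 2 F^i_a F^i_b A_{ab} + (F^i_b)² A_{bb} ) + H² A_cc − ln A_cc ) satisfies the exact conservation law ∂_t E +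 ∂_a( 𝒫^x_a U^x + 𝒫^y_a U^y ) = 0 on Ω. -/
/-- Partial derivative `∂_a f` of a field on `ℝ_t × ℝ_a`. -/
noncomputable def da (f : ℝ × ℝ → ℝ) (x : ℝ × ℝ) : ℝ := fderiv ℝ f x (0, 1)

section
variable {f h : ℝ × ℝ → ℝ} {x v : ℝ × ℝ} {c : ℝ}

lemma pd_add (hf : DifferentiableAt ℝ f x) (hh : DifferentiableAt ℝ h x) :
    fderiv ℝ (fun y => f y + h y) x v = fderiv ℝ f x v + fderiv ℝ h x v := by
  rw [fderiv_fun_add hf hh]; rfl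

lemma pd_sub (hf : DifferentiableAt ℝ f x) (hh : DifferentiableAt ℝ h x) :
    fderiv ℝ (fun y => f y - h y) x v = fderiv ℝ f x v - fderiv ℝ h x v := by
  rw [fderiv_fun_sub hf hh]; rfl

lemma pd_neg : fderiv ℝ (fun y => -f y) x v = -fderiv ℝ f x v := by
  rw [fderiv_fun_neg]; rfl

lemma pd_const : fderiv ℝ (fun _ : ℝ × ℝ => c) x v = 0 := by
  rw [fderiv_fun_const]; rfl

lemma pd_mul (hf : DifferentiableAt ℝ f x) (hh : DifferentiableAt ℝ h x) :
    fderiv ℝ (fun y => f y * h y) x v = fderiv ℝ f x v * h x + f x * fderiv ℝ h x v := by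
  rw [fderiv_fun_mul hf hh]; simp; ring

lemma pd_div_const (hf : DifferentiableAt ℝ f x) :
    fderiv ℝ (fun y => f y / c) x v = fderiv ℝ f x v / c := by
  simp only [div_eq_mul_inv]
  rw [fderiv_mul_const hf]; simp [mul_comm]

lemma pd_inv (hf : DifferentiableAt ℝ f x) (hne : f x ≠ 0) :
    fderiv ℝ (fun y => (f y)⁻¹) x v = -fderiv ℝ f x v / f x ^ 2 := by
  have h1 : HasFDerivAt (fun y => (f y)⁻¹) ((-(f x ^ 2)⁻¹) • fderiv ℝ f x) x :=
    (hasDerivAt_inv hne).comp_hasFDerivAt x hf.hasFDerivAt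
  rw [h1.fderiv]; simp [div_eq_mul_inv]; ring

end


/-- free-energy conservation for the 1D Lagrangian SVM
system.  With constant SPD distortion coefficients `A_{aa}, A_{ab}, A_{bb}`,
constant `A_cc > 0` and constants `F^x_b, F^y_b`, C¹ solutions
`(H > 0, F^x_a, F^y_a, U^x, U^y)` of the one-dimensional Lagrangian
Saint-Venant–Maxwell system satisfy the exact conservation law
`∂_t E + ∂_a(𝒫^x_a U^x + 𝒫^y_a U^y) = 0` for the free energy `E`. -/
theorem svm_lagrangian_energy_conservation (Ω : Set (ℝ × ℝ)) (hΩ : IsOpen Ω)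
    (g G Aaa Aab Abb Acc Fxb Fyb : ℝ)
    (hg : 0 < g) (hG : 0 < G) (hAaa : 0 < Aaa) (hAbb : 0 < Abb)
    (hdetA : 0 < Aaa * Abb - Aab ^ 2) (hAcc : 0 < Acc)
    (H Fxa Fya Ux Uy : ℝ × ℝ → ℝ)
    (hHpos : ∀ x ∈ Ω, 0 < H x)
    (hreg : ∀ x ∈ Ω, DifferentiableAt ℝ H x ∧ DifferentiableAt ℝ Fxa x ∧
      DifferentiableAt ℝ Fya x ∧ DifferentiableAt ℝ Ux x ∧ DifferentiableAt ℝ Uy x)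
    (hmass : ∀ x ∈ Ω,
      dt (fun y => (H y)⁻¹) x - da (fun y => Ux y * Fyb - Uy y * Fxb) x = 0)
    (hFx : ∀ x ∈ Ω, dt Fxa x - da Ux x = 0)
    (hFy : ∀ x ∈ Ω, dt Fya x - da Uy x = 0)
    (hUx : ∀ x ∈ Ω, dt Ux x
      + da (fun y => (g * (H y) ^ 2 / 2 + G * (H y) ^ 3 * Acc) * Fyb
            - G * (Fxa y * Aaa + Fxb * Aab)) x = 0)
    (hUy : ∀ x ∈ Ω, dt Uy x
      + da (fun y => -((g * (H y) ^ 2 / 2 + G * (H y) ^ 3 * Acc) * Fxb)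
            - G * (Fya y * Aaa + Fyb * Aab)) x = 0) :
    ∀ x ∈ Ω,
      dt (fun y => ((Ux y) ^ 2 + (Uy y) ^ 2) / 2 + g * H y / 2
          + (G / 2) * (((Fxa y) ^ 2 * Aaa + 2 * Fxa y * Fxb * Aab + Fxb ^ 2 * Abb)
              + ((Fya y) ^ 2 * Aaa + 2 * Fya y * Fyb * Aab + Fyb ^ 2 * Abb)
              + (H y) ^ 2 * Acc - Real.log Acc)) x
      + da (fun y =>
          ((g * (H y) ^ 2 / 2 + G * (H y) ^ 3 * Acc) * Fyb
              - G * (Fxa y * Aaa + Fxb * Aab)) * Ux y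
            + (-((g * (H y) ^ 2 / 2 + G * (H y) ^ 3 * Acc) * Fxb)
              - G * (Fya y * Aaa + Fyb * Aab)) * Uy y) x = 0 := by

  intro x hx
  obtain ⟨hdH, hdFxa, hdFya, hdUx, hdUy⟩ := hreg x hx
  have hHne : H x ≠ 0 := (hHpos x hx).ne'
  have hm := hmass x hx
  have hfx := hFx x hx
  have hfy := hFy x hx
  have hux := hUx x hx
  have huy := hUy x hx
  clear hmass hFx hFy hUx hUy hreg hHpos
  simp only [dt, da, pow_succ, pow_zero, one_mul] at hm hfx hfy hux huy ⊢
  rw [pd_inv hdH hHne] at hm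
  simp (disch := fun_prop) only [pd_add, pd_sub, pd_mul, pd_neg, pd_const,
    pd_div_const, zero_mul, mul_zero, add_zero, zero_add, neg_zero, zero_sub,
    sub_zero, zero_div] at hm hfx hfy hux huy ⊢
  have e1 : fderiv ℝ Fxa x (1, 0) = fderiv ℝ Ux x (0, 1) := by linarith
  have e2 : fderiv ℝ Fya x (1, 0) = fderiv ℝ Uy x (0, 1) := by linarith
  have e3 : fderiv ℝ H x (1, 0) =
      -(H x * H x) * (fderiv ℝ Ux x (0, 1) * Fyb - fderiv ℝ Uy x (0, 1) * Fxb) := by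
    have h2 : H x ^ 2 ≠ 0 := pow_ne_zero 2 hHne
    field_simp at hm
    nlinarith [hm]
  rw [e1, e2, e3]
  linear_combination (Ux x) * hux + (Uy x) * huy
end

section
/- Let λ > 0 and let H > 0 (scalar), U (ℝ²-valued), F (2×2-matrix-valued, pointwise invertible), A (2×2 symmetric positive-definite matrix-valued) and A_cc > 0 (scalar) be C¹ fields on an open subset of ℝ_t × ℝ²_x satisfying: ∂_t H + div(H U) = 0; ∂_t F + (U·∇)F = (∇U)·F with (∇U)^i_j = ∂_{x_j} U^i; ∂_t A + (U·∇)A = ( F⁻¹ F⁻ᵀ − A )/λ; and ∂_t A_cc + (U·∇)A_cc = ( H⁻² − A_cc )/λ. Then the fields B := F A Fᵀ and B_zz := H² A_cc satisfy the Upper-Convected Maxwell equations: ∂_t B + (U·∇)B − (∇U)·B − B·(∇U)ᵀ = ( I − B )/λ and ∂_t B_zz + (U·∇)B_zz + 2 B_zz · div U = ( 1 − B_zz )/λ, where I is the 2×2 identity matrix. -/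
open Matrix

section DvLemmas

variable {E : Type*} [NormedAddCommGroup E] [NormedSpace ℝ E] {f g : E → ℝ} {x : E}

theorem Dv_add (hf : DifferentiableAt ℝ f x) (hg : DifferentiableAt ℝ g x) (v : E) :
    fderiv ℝ (fun y => f y + g y) x v = fderiv ℝ f x v + fderiv ℝ g x v := by
  rw [fderiv_fun_add hf hg]; simp

theorem Dv_mul (hf : DifferentiableAt ℝ f x) (hg : DifferentiableAt ℝ g x) (v : E) :
    fderiv ℝ (fun y => f y * g y) x v = fderiv ℝ f x v * g x + f x * fderiv ℝ g x v := by
  rw [fderiv_fun_mul hf hg]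
  simp only [ContinuousLinearMap.add_apply, ContinuousLinearMap.smul_apply, smul_eq_mul]
  ring

theorem Dv_B (F A : E → Fin 2 → Fin 2 → ℝ) (i k : Fin 2) (x : E)
    (dF : ∀ a b, DifferentiableAt ℝ (fun y => F y a b) x)
    (dA : ∀ a b, DifferentiableAt ℝ (fun y => A y a b) x) (v : E) :
    fderiv ℝ (fun y => (Matrix.of (F y) * Matrix.of (A y) * (Matrix.of (F y))ᵀ) i k) x v
      = ∑ a, ∑ b, (fderiv ℝ (fun y => F y i a) x v * (A x a b * F x k b)
          + F x i a * (fderiv ℝ (fun y => A y a b) x v * F x k b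
            + A x a b * fderiv ℝ (fun y => F y k b) x v)) := by
  have hfun : (fun y => (Matrix.of (F y) * Matrix.of (A y) * (Matrix.of (F y))ᵀ) i k)
      = fun y => F y i 0 * (A y 0 0 * F y k 0) + F y i 0 * (A y 0 1 * F y k 1)
          + (F y i 1 * (A y 1 0 * F y k 0) + F y i 1 * (A y 1 1 * F y k 1)) := by
    funext y
    simp only [Matrix.mul_apply, Matrix.transpose_apply, Matrix.of_apply, Fin.sum_univ_two]
    ring
  have dT : ∀ a b : Fin 2, DifferentiableAt ℝ (fun y => F y i a * (A y a b * F y k b)) x :=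
    fun a b => (dF i a).mul ((dA a b).mul (dF k b))
  have DT : ∀ a b : Fin 2, fderiv ℝ (fun y => F y i a * (A y a b * F y k b)) x v
      = fderiv ℝ (fun y => F y i a) x v * (A x a b * F x k b)
        + F x i a * (fderiv ℝ (fun y => A y a b) x v * F x k b
          + A x a b * fderiv ℝ (fun y => F y k b) x v) := fun a b => by
    rw [Dv_mul (dF i a) ((dA a b).fun_mul (dF k b)) v, Dv_mul (dA a b) (dF k b) v]
  rw [hfun, Dv_add ((dT 0 0).fun_add (dT 0 1)) ((dT 1 0).fun_add (dT 1 1)) v,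
    Dv_add (dT 0 0) (dT 0 1) v, Dv_add (dT 1 0) (dT 1 1) v, DT 0 0, DT 0 1, DT 1 0, DT 1 1]
  simp only [Fin.sum_univ_two]

end DvLemmas

/-- smooth SVM solutions solve the Upper-Convected Maxwell
equations.  Let `λ > 0` and let `H > 0`, `U`, `F` (pointwise invertible),
`A` (pointwise symmetric positive-definite) and `A_cc > 0` be C¹ fields on an
open `Ω ⊆ ℝ_t × ℝ²_x` satisfying the continuity, transport-stretching and
relaxation equations of the Saint-Venant–Maxwell system. Then `B := F A Fᵀ`
and `B_zz := H² A_cc` satisfy the Upper-Convected Maxwell equations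
`∂_t B + (U·∇)B − (∇U)B − B(∇U)ᵀ = (I − B)/λ` and
`∂_t B_zz + (U·∇)B_zz + 2 B_zz div U = (1 − B_zz)/λ`. -/

theorem svm_implies_ucm (lam : ℝ) (hlam : 0 < lam)
    (Ω : Set (ℝ × (Fin 2 → ℝ))) (hΩ : IsOpen Ω)
    (H Acc : ℝ × (Fin 2 → ℝ) → ℝ)
    (U : ℝ × (Fin 2 → ℝ) → Fin 2 → ℝ)
    (F A : ℝ × (Fin 2 → ℝ) → Fin 2 → Fin 2 → ℝ)
    (hHpos : ∀ x ∈ Ω, 0 < H x) (hAccpos : ∀ x ∈ Ω, 0 < Acc x)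
    (hFinv : ∀ x ∈ Ω, (Matrix.of (F x)).det ≠ 0)
    (hApd : ∀ x ∈ Ω, (Matrix.of (A x)).PosDef)
    (hreg : ∀ x ∈ Ω, DifferentiableAt ℝ H x ∧ DifferentiableAt ℝ Acc x ∧
      (∀ i, DifferentiableAt ℝ (fun y => U y i) x) ∧
      (∀ i α, DifferentiableAt ℝ (fun y => F y i α) x) ∧
      (∀ α β, DifferentiableAt ℝ (fun y => A y α β) x))
    (hmass : ∀ x ∈ Ω, pt H x + ∑ j, px j (fun y => H y * U y j) x = 0)
    (hFeq : ∀ i α : Fin 2, ∀ x ∈ Ω,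
      pt (fun y => F y i α) x + ∑ j, U x j * px j (fun y => F y i α) x
        = ∑ j, px j (fun y => U y i) x * F x j α)
    (hAeq : ∀ α β : Fin 2, ∀ x ∈ Ω,
      pt (fun y => A y α β) x + ∑ j, U x j * px j (fun y => A y α β) x
        = (((Matrix.of (F x))⁻¹ * ((Matrix.of (F x))⁻¹)ᵀ) α β - A x α β) / lam)
    (hAcceq : ∀ x ∈ Ω,
      pt Acc x + ∑ j, U x j * px j Acc x = (((H x) ^ 2)⁻¹ - Acc x) / lam) :
    (∀ i k : Fin 2, ∀ x ∈ Ω,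
      pt (fun y => (Matrix.of (F y) * Matrix.of (A y) * (Matrix.of (F y))ᵀ) i k) x
        + ∑ j, U x j *
            px j (fun y => (Matrix.of (F y) * Matrix.of (A y) * (Matrix.of (F y))ᵀ) i k) x
        - ∑ j, px j (fun y => U y i) x *
            (Matrix.of (F x) * Matrix.of (A x) * (Matrix.of (F x))ᵀ) j k
        - ∑ j, (Matrix.of (F x) * Matrix.of (A x) * (Matrix.of (F x))ᵀ) i j *
            px j (fun y => U y k) x
        = ((1 : Matrix (Fin 2) (Fin 2) ℝ) i k
            - (Matrix.of (F x) * Matrix.of (A x) * (Matrix.of (F x))ᵀ) i k) / lam) ∧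
    (∀ x ∈ Ω,
      pt (fun y => (H y) ^ 2 * Acc y) x
        + ∑ j, U x j * px j (fun y => (H y) ^ 2 * Acc y) x
        + 2 * ((H x) ^ 2 * Acc x) * ∑ j, px j (fun y => U y j) x
        = (1 - (H x) ^ 2 * Acc x) / lam) := by
  constructor
  · intro i k x hx
    obtain ⟨hH, hAcc, hU, hF, hA⟩ := hreg x hx
    have hdet := hFinv x hx
    have key : Matrix.of (F x) * ((Matrix.of (F x))⁻¹ * ((Matrix.of (F x))⁻¹)ᵀ)
        * (Matrix.of (F x))ᵀ = 1 := by
      have h1 : Matrix.of (F x) * (Matrix.of (F x))⁻¹ = 1 :=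
        Matrix.mul_nonsing_inv _ (isUnit_iff_ne_zero.mpr hdet)
      calc Matrix.of (F x) * ((Matrix.of (F x))⁻¹ * ((Matrix.of (F x))⁻¹)ᵀ)
            * (Matrix.of (F x))ᵀ
          = (Matrix.of (F x) * (Matrix.of (F x))⁻¹)
            * (Matrix.of (F x) * (Matrix.of (F x))⁻¹)ᵀ := by
            rw [Matrix.transpose_mul]; noncomm_ring
        _ = 1 := by rw [h1]; simp
    have hGid : (Matrix.of (F x) * ((Matrix.of (F x))⁻¹ * ((Matrix.of (F x))⁻¹)ᵀ)
        * (Matrix.of (F x))ᵀ) i k = (1 : Matrix (Fin 2) (Fin 2) ℝ) i k := by rw [key]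
    have hFi0 := hFeq i 0 x hx; have hFi1 := hFeq i 1 x hx
    have hFk0 := hFeq k 0 x hx; have hFk1 := hFeq k 1 x hx
    have hA00 := hAeq 0 0 x hx; have hA01 := hAeq 0 1 x hx
    have hA10 := hAeq 1 0 x hx; have hA11 := hAeq 1 1 x hx
    simp only [pt, px, Fin.sum_univ_two] at hFi0 hFi1 hFk0 hFk1 hA00 hA01 hA10 hA11 ⊢
    rw [Dv_B F A i k x hF hA (1, 0), Dv_B F A i k x hF hA (0, Pi.single 0 1),
      Dv_B F A i k x hF hA (0, Pi.single 1 1)]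
    simp only [Matrix.mul_apply, Matrix.transpose_apply, Matrix.of_apply, Fin.sum_univ_two]
      at hGid hA00 hA01 hA10 hA11 ⊢
    linear_combination (A x 0 0 * F x k 0 + A x 0 1 * F x k 1) * hFi0
      + (A x 1 0 * F x k 0 + A x 1 1 * F x k 1) * hFi1
      + (F x i 0 * A x 0 0 + F x i 1 * A x 1 0) * hFk0
      + (F x i 0 * A x 0 1 + F x i 1 * A x 1 1) * hFk1
      + (F x i 0 * F x k 0) * hA00 + (F x i 0 * F x k 1) * hA01
      + (F x i 1 * F x k 0) * hA10 + (F x i 1 * F x k 1) * hA11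
      + (1 / lam) * hGid
  · intro x hx
    obtain ⟨hH, hAcc, hU, hF, hA⟩ := hreg x hx
    have hm := hmass x hx
    have hac := hAcceq x hx
    have hne : H x ^ 2 * (H x ^ 2)⁻¹ = 1 :=
      mul_inv_cancel₀ (pow_ne_zero 2 (hHpos x hx).ne')
    rw [show (fun y => H y ^ 2 * Acc y) = fun y => H y * (H y * Acc y) from
      funext fun y => by ring]
    simp only [pt, px, Fin.sum_univ_two] at hm hac ⊢
    rw [Dv_mul hH (hU 0) (0, Pi.single 0 1), Dv_mul hH (hU 1) (0, Pi.single 1 1)] at hm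
    rw [Dv_mul hH (hH.fun_mul hAcc) (1, 0), Dv_mul hH hAcc (1, 0),
      Dv_mul hH (hH.fun_mul hAcc) (0, Pi.single 0 1), Dv_mul hH hAcc (0, Pi.single 0 1),
      Dv_mul hH (hH.fun_mul hAcc) (0, Pi.single 1 1), Dv_mul hH hAcc (0, Pi.single 1 1)]
    linear_combination (2 * H x * Acc x) * hm + H x ^ 2 * hac + (1 / lam) * hne
end
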